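/- arXiv:1209.2066 — 11 statements merged into one kernel-verified Lean document; each statement's English description precedes it below -/
import Mathlib

section
/- Let X have pmf p(x)>0 on 𝒳={1,…,K}, let Y be generated by a channel p(y|x)>0 for all x,y, let ρ:𝒳×𝒳→[0,∞) be a distortion measure, let f:𝒳→{1,…,M} be an encoder and g:{1,…,M}×𝒳→𝒳 a decoder, and set D = Σ_{x,y} p(x)p(y|x)·ρ(x, g(f(x),y)). Then R(D) ≤ I(X;Y) + H(f(X)|Y), where R(D) = inf{ I(X;X̂) : conditional pmfs p(x̂|x) with Σ_{x,x̂} p(x)p(x̂|x)ρ(x,x̂) ≤ D } is the classical rate–distortion function of X and all information quantities use base-2 logarithms. -/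
lemma gibbs {ι : Type*} [Fintype ι] (a b : ι → ℝ) (ha : ∀ i, 0 ≤ a i)
    (hb : ∀ i, 0 ≤ b i) (hab : ∀ i, 0 < a i → 0 < b i)
    (h : ∑ i, b i ≤ ∑ i, a i) :
    0 ≤ ∑ i, a i * Real.logb 2 (a i / b i) := by
  have hlog2 : (0:ℝ) < Real.log 2 := Real.log_pos (by norm_num)
  have key : ∀ i, (a i - b i) / Real.log 2 ≤ a i * Real.logb 2 (a i / b i) := by
    intro i
    rcases eq_or_lt_of_le (ha i) with h0 | h0
    · rw [← h0]
      simp only [zero_mul, zero_sub]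
      have := hb i
      apply div_nonpos_of_nonpos_of_nonneg <;> linarith
    · have hbi := hab i h0
      have h1 : Real.log (b i / a i) ≤ b i / a i - 1 :=
        Real.log_le_sub_one_of_pos (by positivity)
      have h2 : a i - b i ≤ a i * Real.log (a i / b i) := by
        have h3 : Real.log (a i / b i) = - Real.log (b i / a i) := by
          rw [Real.log_div h0.ne' hbi.ne', Real.log_div hbi.ne' h0.ne']; ring
        rw [h3]
        have h4 : a i * (b i / a i - 1) = b i - a i := by field_simp
        nlinarith
      rw [Real.logb, ← mul_div_assoc]
      exact (div_le_div_iff_of_pos_right hlog2).mpr h2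
  calc (0:ℝ) ≤ (∑ i, a i - ∑ i, b i) / Real.log 2 := by
        apply div_nonneg _ hlog2.le; linarith
    _ = ∑ i, (a i - b i) / Real.log 2 := by
        rw [← Finset.sum_sub_distrib, Finset.sum_div]
    _ ≤ _ := Finset.sum_le_sum fun i _ => key i

lemma collapse {K : ℕ} (w : Fin K → ℝ) (h : Fin K → Fin K) (φ : Fin K → ℝ) :
    ∑ xh, (∑ y, w y * (if h y = xh then 1 else 0)) * φ xh = ∑ y, w y * φ (h y) := by
  simp only [Finset.sum_mul, mul_ite, mul_one, mul_zero, ite_mul, zero_mul]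
  rw [Finset.sum_comm]
  simp [Finset.sum_ite_eq]

/-- `R(D) ≤ I(X;Y) + H(f(X)|Y)` in the Wyner–Ziv scalar coding setting with a
deterministic encoder `f` and decoder `g`. -/
theorem stmt_4 (K M : ℕ) (hK : 0 < K) (hM : 0 < M)
    (p : Fin K → ℝ) (hp : ∀ x, 0 < p x) (hpsum : ∑ x, p x = 1)
    (W : Fin K → Fin K → ℝ) (hW : ∀ x y, 0 < W x y) (hWsum : ∀ x, ∑ y, W x y = 1)
    (ρ : Fin K → Fin K → ℝ) (hρ : ∀ x xh, 0 ≤ ρ x xh)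
    (f : Fin K → Fin M) (g : Fin M → Fin K → Fin K)
    (D : ℝ) (hD : D = ∑ x, ∑ y, p x * W x y * ρ x (g (f x) y))
    (pY : Fin K → ℝ) (hpY : ∀ y, pY y = ∑ x, p x * W x y)
    (pYZ : Fin K → Fin M → ℝ)
    (hpYZ : ∀ y z, pYZ y z = ∑ x ∈ Finset.univ.filter (fun x => f x = z), p x * W x y) :
    sInf { r : ℝ | ∃ pc : Fin K → Fin K → ℝ,
        (∀ x xh, 0 ≤ pc x xh) ∧ (∀ x, ∑ xh, pc x xh = 1) ∧
        (∑ x, ∑ xh, p x * pc x xh * ρ x xh ≤ D) ∧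
        r = ∑ x, ∑ xh, p x * pc x xh *
            Real.logb 2 (pc x xh / (∑ x', p x' * pc x' xh)) }
      ≤ (∑ x, ∑ y, p x * W x y * Real.logb 2 (W x y / pY y))
        + (- ∑ y, ∑ z, pYZ y z * Real.logb 2 (pYZ y z / pY y)) := by
  classical
  haveI : Nonempty (Fin K) := Fin.pos_iff_nonempty.mp hK
  -- the induced test channel
  set pc : Fin K → Fin K → ℝ :=
    fun x xh => ∑ y, W x y * (if g (f x) y = xh then 1 else 0) with hpc_def
  set q : Fin K → ℝ := fun xh => ∑ x, p x * pc x xh with hq_def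
  have hpc0 : ∀ x xh, 0 ≤ pc x xh := by
    intro x xh
    apply Finset.sum_nonneg
    intro y _
    have := (hW x y).le
    positivity
  have hq0 : ∀ xh, 0 ≤ q xh := by
    intro xh
    apply Finset.sum_nonneg
    intro x _
    exact mul_nonneg (hp x).le (hpc0 x xh)
  -- pulling a sum over xh back to a sum over y
  have hcollapse : ∀ (x : Fin K) (φ : Fin K → ℝ),
      ∑ xh, pc x xh * φ xh = ∑ y, W x y * φ (g (f x) y) := by
    intro x φ
    exact collapse (W x) (fun y => g (f x) y) φ
  have hpcsum : ∀ x, ∑ xh, pc x xh = 1 := by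
    intro x
    have := hcollapse x (fun _ => 1)
    simpa [hWsum x] using this
  -- positivity along the support
  have hpcpos : ∀ x y, 0 < pc x (g (f x) y) := by
    intro x y
    have hle : W x y * (if g (f x) y = g (f x) y then (1:ℝ) else 0) ≤ pc x (g (f x) y) := by
      apply Finset.single_le_sum (f := fun y' => W x y' * (if g (f x) y' = g (f x) y then (1:ℝ) else 0))
        (fun y' _ => by have := (hW x y').le; positivity) (Finset.mem_univ y)
    simp only [if_true, eq_self_iff_true, if_pos, mul_one] at hle
    exact lt_of_lt_of_le (hW x y) hle
  have hqpos : ∀ x y, 0 < q (g (f x) y) := by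
    intro x y
    have hle : p x * pc x (g (f x) y) ≤ q (g (f x) y) :=
      Finset.single_le_sum (f := fun x' => p x' * pc x' (g (f x) y))
        (fun x' _ => mul_nonneg (hp x').le (hpc0 x' _)) (Finset.mem_univ x)
    exact lt_of_lt_of_le (mul_pos (hp x) (hpcpos x y)) hle
  have hpYpos : ∀ y, 0 < pY y := by
    intro y
    rw [hpY]
    exact Finset.sum_pos (fun x _ => mul_pos (hp x) (hW x y)) Finset.univ_nonempty
  have hpYZpos : ∀ x y, 0 < pYZ y (f x) := by
    intro x y
    rw [hpYZ]
    have hmem : x ∈ Finset.univ.filter (fun x' => f x' = f x) := by simp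
    have hle : p x * W x y ≤ ∑ x' ∈ Finset.univ.filter (fun x' => f x' = f x), p x' * W x' y :=
      Finset.single_le_sum (fun x' _ => (mul_pos (hp x') (hW x' y)).le) hmem
    exact lt_of_lt_of_le (mul_pos (hp x) (hW x y)) hle
  have hpYZ0 : ∀ y z, 0 ≤ pYZ y z := by
    intro y z
    rw [hpYZ]
    exact Finset.sum_nonneg fun x _ => (mul_pos (hp x) (hW x y)).le
  -- marginals
  have hpYZsum : ∀ y, ∑ z, pYZ y z = pY y := by
    intro y
    rw [hpY]
    simp only [hpYZ]
    exact Finset.sum_fiberwise Finset.univ f (fun x => p x * W x y)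
  have hpYsum : ∑ y, pY y = 1 := by
    simp only [hpY]
    rw [Finset.sum_comm]
    simp only [← Finset.mul_sum, hWsum, mul_one, hpsum]
  -- the value of mutual information for the induced channel
  set r₀ : ℝ := ∑ x, ∑ xh, p x * pc x xh * Real.logb 2 (pc x xh / q xh) with hr0_def
  -- membership
  have hmem : r₀ ∈ { r : ℝ | ∃ pc : Fin K → Fin K → ℝ,
      (∀ x xh, 0 ≤ pc x xh) ∧ (∀ x, ∑ xh, pc x xh = 1) ∧
      (∑ x, ∑ xh, p x * pc x xh * ρ x xh ≤ D) ∧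
      r = ∑ x, ∑ xh, p x * pc x xh *
          Real.logb 2 (pc x xh / (∑ x', p x' * pc x' xh)) } := by
    refine ⟨pc, hpc0, hpcsum, ?_, rfl⟩
    have hdist : ∀ x, ∑ xh, p x * pc x xh * ρ x xh = ∑ y, p x * W x y * ρ x (g (f x) y) := by
      intro x
      have h1 : ∑ xh, p x * pc x xh * ρ x xh = p x * ∑ xh, pc x xh * ρ x xh := by
        rw [Finset.mul_sum]; congr 1; ext xh; ring
      rw [h1, hcollapse x (fun xh => ρ x xh), Finset.mul_sum]
      congr 1; ext y; ring
    rw [hD]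
    exact le_of_eq (Finset.sum_congr rfl fun x _ => hdist x)
  -- bounded below by 0
  have hbdd : BddBelow { r : ℝ | ∃ pc : Fin K → Fin K → ℝ,
      (∀ x xh, 0 ≤ pc x xh) ∧ (∀ x, ∑ xh, pc x xh = 1) ∧
      (∑ x, ∑ xh, p x * pc x xh * ρ x xh ≤ D) ∧
      r = ∑ x, ∑ xh, p x * pc x xh *
          Real.logb 2 (pc x xh / (∑ x', p x' * pc x' xh)) } := by
    refine ⟨0, ?_⟩
    rintro r ⟨pc', hpc'0, hpc'sum, -, rfl⟩
    set q' : Fin K → ℝ := fun xh => ∑ x', p x' * pc' x' xh with hq'_def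
    have key := gibbs (ι := Fin K × Fin K)
      (fun i => p i.1 * pc' i.1 i.2) (fun i => p i.1 * q' i.2)
      (fun i => mul_nonneg (hp i.1).le (hpc'0 i.1 i.2))
      (fun i => mul_nonneg (hp i.1).le
        (Finset.sum_nonneg fun x' _ => mul_nonneg (hp x').le (hpc'0 x' i.2)))
      (fun i hi => by
        have hi' : 0 < p i.1 * pc' i.1 i.2 := hi
        have hpc'pos : 0 < pc' i.1 i.2 := by
          rcases eq_or_lt_of_le (hpc'0 i.1 i.2) with h | h
          · rw [← h, mul_zero] at hi'; exact absurd hi' (lt_irrefl 0)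
          · exact h
        have hle : p i.1 * pc' i.1 i.2 ≤ q' i.2 :=
          Finset.single_le_sum (f := fun x' => p x' * pc' x' i.2)
            (fun x' _ => mul_nonneg (hp x').le (hpc'0 x' i.2)) (Finset.mem_univ i.1)
        exact mul_pos (hp i.1) (lt_of_lt_of_le hi' hle))
      (by
        have h1 : ∑ i : Fin K × Fin K, p i.1 * pc' i.1 i.2 = 1 := by
          rw [Fintype.sum_prod_type]
          simp only [← Finset.mul_sum, hpc'sum, mul_one, hpsum]
        have h2 : ∑ i : Fin K × Fin K, p i.1 * q' i.2 = 1 := by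
          rw [Fintype.sum_prod_type, ← Finset.sum_mul_sum, hpsum, one_mul, hq'_def,
            Finset.sum_comm]
          have h1' : ∑ x, ∑ xh, p x * pc' x xh = 1 := by
            simp only [← Finset.mul_sum, hpc'sum, mul_one, hpsum]
          exact h1'
        rw [h1, h2])
    have keq : ∑ i : Fin K × Fin K,
        (p i.1 * pc' i.1 i.2) * Real.logb 2 ((p i.1 * pc' i.1 i.2) / (p i.1 * q' i.2))
        = ∑ x, ∑ xh, p x * pc' x xh * Real.logb 2 (pc' x xh / q' xh) := by
      rw [Fintype.sum_prod_type]
      apply Finset.sum_congr rfl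
      intro x _
      apply Finset.sum_congr rfl
      intro xh _
      congr 2
      rw [mul_div_mul_left _ _ (hp x).ne']
    rw [keq] at key
    exact key
  -- reduce to showing r₀ ≤ RHS
  refine le_trans (csInf_le hbdd hmem) ?_
  -- rewrite r₀ as a sum over (x, y)
  have hr0 : r₀ = ∑ x, ∑ y, p x * W x y *
      Real.logb 2 (pc x (g (f x) y) / q (g (f x) y)) := by
    rw [hr0_def]
    apply Finset.sum_congr rfl
    intro x _
    have h1 : ∑ xh, p x * pc x xh * Real.logb 2 (pc x xh / q xh)
        = p x * ∑ xh, pc x xh * Real.logb 2 (pc x xh / q xh) := by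
      rw [Finset.mul_sum]; congr 1; ext xh; ring
    rw [h1, hcollapse x (fun xh => Real.logb 2 (pc x xh / q xh)), Finset.mul_sum]
    congr 1; ext y; ring
  -- rewrite the conditional entropy term as a sum over (x, y)
  have hB : ∑ y, ∑ z, pYZ y z * Real.logb 2 (pYZ y z / pY y)
      = ∑ x, ∑ y, p x * W x y * Real.logb 2 (pYZ y (f x) / pY y) := by
    have step : ∀ y, ∑ z, pYZ y z * Real.logb 2 (pYZ y z / pY y)
        = ∑ x, p x * W x y * Real.logb 2 (pYZ y (f x) / pY y) := by
      intro y
      have h1 : ∀ z : Fin M, pYZ y z * Real.logb 2 (pYZ y z / pY y)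
          = ∑ x ∈ Finset.univ.filter (fun x => f x = z),
              p x * W x y * Real.logb 2 (pYZ y (f x) / pY y) := by
        intro z
        rw [hpYZ, Finset.sum_mul]
        apply Finset.sum_congr rfl
        intro x hx
        rw [Finset.mem_filter] at hx
        rw [hx.2, ← hpYZ]
      rw [Finset.sum_congr rfl fun z _ => h1 z]
      exact Finset.sum_fiberwise Finset.univ f
        (fun x => p x * W x y * Real.logb 2 (pYZ y (f x) / pY y))
    calc ∑ y, ∑ z, pYZ y z * Real.logb 2 (pYZ y z / pY y)
        = ∑ y, ∑ x, p x * W x y * Real.logb 2 (pYZ y (f x) / pY y) :=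
          Finset.sum_congr rfl fun y _ => step y
      _ = ∑ x, ∑ y, p x * W x y * Real.logb 2 (pYZ y (f x) / pY y) := Finset.sum_comm
  rw [hr0, hB, ← sub_nonneg]
  -- set up the Gibbs inequality on pairs (x, y)
  set a : Fin K × Fin K → ℝ := fun i => p i.1 * W i.1 i.2 with ha_def
  set b : Fin K × Fin K → ℝ :=
    fun i => p i.1 * pc i.1 (g (f i.1) i.2) * pYZ i.2 (f i.1) / q (g (f i.1) i.2) with hb_def
  have hbpos : ∀ i : Fin K × Fin K, 0 < b i := by
    intro i
    have := hp i.1; have := hpcpos i.1 i.2; have := hpYZpos i.1 i.2; have := hqpos i.1 i.2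
    positivity
  have hsuma : ∑ i : Fin K × Fin K, a i = 1 := by
    rw [ha_def, Fintype.sum_prod_type]
    simp only [← Finset.mul_sum, hWsum, mul_one, hpsum]
  have hsumb : ∑ i : Fin K × Fin K, b i ≤ 1 := by
    -- expand over z and bound
    set c : Fin K → Fin K → Fin M → ℝ :=
      fun x y z => p x * pc x (g z y) * pYZ y z / q (g z y) with hc_def
    have hc0 : ∀ x y z, 0 ≤ c x y z := by
      intro x y z
      have h1 : 0 ≤ p x * pc x (g z y) * pYZ y z :=
        mul_nonneg (mul_nonneg (hp x).le (hpc0 x _)) (hpYZ0 y z)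
      exact div_nonneg h1 (hq0 _)
    have hble : ∀ x y, b (x, y) ≤ ∑ z, c x y z := by
      intro x y
      have : b (x, y) = c x y (f x) := rfl
      rw [this]
      exact Finset.single_le_sum (fun z _ => hc0 x y z) (Finset.mem_univ (f x))
    have hcsum : ∀ y z, ∑ x, c x y z ≤ pYZ y z := by
      intro y z
      have h1 : ∑ x, c x y z = (∑ x, p x * pc x (g z y)) * (pYZ y z / q (g z y)) := by
        rw [Finset.sum_mul]
        apply Finset.sum_congr rfl
        intro x _
        rw [hc_def]
        ring
      have h2 : (∑ x, p x * pc x (g z y)) = q (g z y) := rfl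
      rw [h1, h2]
      rcases eq_or_lt_of_le (hq0 (g z y)) with h | h
      · rw [← h, zero_mul]; exact hpYZ0 y z
      · rw [mul_div_cancel₀ _ h.ne']
    calc ∑ i : Fin K × Fin K, b i = ∑ x, ∑ y, b (x, y) := by rw [Fintype.sum_prod_type]
      _ ≤ ∑ x, ∑ y, ∑ z, c x y z :=
          Finset.sum_le_sum fun x _ => Finset.sum_le_sum fun y _ => hble x y
      _ = ∑ y, ∑ z, ∑ x, c x y z := by
          rw [Finset.sum_comm]
          exact Finset.sum_congr rfl fun y _ => Finset.sum_comm
      _ ≤ ∑ y, ∑ z, pYZ y z :=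
          Finset.sum_le_sum fun y _ => Finset.sum_le_sum fun z _ => hcsum y z
      _ = ∑ y, pY y := Finset.sum_congr rfl fun y _ => hpYZsum y
      _ = 1 := hpYsum
  have key := gibbs a b (fun i => (mul_pos (hp i.1) (hW i.1 i.2)).le)
    (fun i => (hbpos i).le) (fun i _ => hbpos i) (by rw [hsuma]; exact hsumb)
  -- identify the Gibbs sum with the difference
  have hident : ∑ i : Fin K × Fin K, a i * Real.logb 2 (a i / b i)
      = (∑ x, ∑ y, p x * W x y * Real.logb 2 (W x y / pY y))
        + (- ∑ x, ∑ y, p x * W x y * Real.logb 2 (pYZ y (f x) / pY y))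
        - ∑ x, ∑ y, p x * W x y * Real.logb 2 (pc x (g (f x) y) / q (g (f x) y)) := by
    have hterm : ∀ x y : Fin K,
        a (x, y) * Real.logb 2 (a (x, y) / b (x, y))
        = p x * W x y * Real.logb 2 (W x y / pY y)
          - p x * W x y * Real.logb 2 (pYZ y (f x) / pY y)
          - p x * W x y * Real.logb 2 (pc x (g (f x) y) / q (g (f x) y)) := by
      intro x y
      have e1 : a (x, y) = p x * W x y := rfl
      have e2 : a (x, y) / b (x, y)
          = (W x y / pY y) / (pYZ y (f x) / pY y) / (pc x (g (f x) y) / q (g (f x) y)) := by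
        rw [e1, hb_def]
        have h1 := (hp x).ne'
        have h2 := (hW x y).ne'
        have h3 := (hpYpos y).ne'
        have h4 := (hpYZpos x y).ne'
        have h5 := (hpcpos x y).ne'
        have h6 := (hqpos x y).ne'
        field_simp
      have hA : (0:ℝ) < W x y / pY y := div_pos (hW x y) (hpYpos y)
      have hB2 : (0:ℝ) < pYZ y (f x) / pY y := div_pos (hpYZpos x y) (hpYpos y)
      have hC : (0:ℝ) < pc x (g (f x) y) / q (g (f x) y) := div_pos (hpcpos x y) (hqpos x y)
      rw [e1, e2, Real.logb_div (div_pos hA hB2).ne' hC.ne', Real.logb_div hA.ne' hB2.ne']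
      ring
    calc ∑ i : Fin K × Fin K, a i * Real.logb 2 (a i / b i)
        = ∑ x, ∑ y, a (x, y) * Real.logb 2 (a (x, y) / b (x, y)) := by
          rw [Fintype.sum_prod_type]
      _ = ∑ x, ∑ y, (p x * W x y * Real.logb 2 (W x y / pY y)
          - p x * W x y * Real.logb 2 (pYZ y (f x) / pY y)
          - p x * W x y * Real.logb 2 (pc x (g (f x) y) / q (g (f x) y))) :=
          Finset.sum_congr rfl fun x _ => Finset.sum_congr rfl fun y _ => hterm x y
      _ = _ := by
          simp only [Finset.sum_sub_distrib]
          ring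
  rw [← hident]
  exact key
end

section
/- Let X have pmf p(x)>0 on 𝒳={1,…,K}, let Y be generated by a channel p(y|x)>0 for all x,y, let Z be a (possibly randomized) encoder output with conditional pmf p(z|x) on {1,…,M} so that p(x,y,z)=p(x)p(y|x)p(z|x), let g:{1,…,M}×𝒳→𝒳 be a decoder, and set D = Σ_{x,y,z} p(x)p(y|x)p(z|x)·ρ(x,g(z,y)). Then R(D) ≤ I(X;Y) + H(Z|Y) − H(Z|X), where R(D) is the classical rate–distortion function of X with respect to ρ and all information quantities use base-2 logarithms. -/
lemma logb_term_ge (a b : ℝ) (ha : 0 ≤ a) (hb0 : 0 ≤ b) (hb : a ≠ 0 → 0 < b) :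
    (Real.log 2)⁻¹ * (a - b) ≤ a * Real.logb 2 (a / b) := by
  have h2 : (0:ℝ) < Real.log 2 := Real.log_pos one_lt_two
  rcases eq_or_ne a 0 with rfl | hane
  · have : (Real.log 2)⁻¹ * (0 - b) ≤ 0 := by
      have := inv_pos.mpr h2
      nlinarith
    simpa using this
  · have hapos : 0 < a := lt_of_le_of_ne ha (Ne.symm hane)
    have hbpos : 0 < b := hb hane
    have hlog : Real.log (b / a) ≤ b / a - 1 := Real.log_le_sub_one_of_pos (by positivity)
    have hkey : a - b ≤ a * Real.log (a / b) := by
      have hneg : Real.log (a / b) = - Real.log (b / a) := by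
        rw [← Real.log_inv]; congr 1; field_simp
      rw [hneg]
      have h1 := mul_le_mul_of_nonneg_left hlog (le_of_lt hapos)
      have hba : a * (b / a - 1) = b - a := by field_simp
      nlinarith
    have heq : a * Real.logb 2 (a / b) = (Real.log 2)⁻¹ * (a * Real.log (a / b)) := by
      unfold Real.logb; ring
    rw [heq]
    exact mul_le_mul_of_nonneg_left hkey (le_of_lt (inv_pos.mpr h2))

/-- `R(D) ≤ I(X;Y) + H(Z|Y) − H(Z|X)` for a possibly randomized encoder `p(z|x)`,
where `Z ↔ X ↔ Y` is a Markov chain. -/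
theorem stmt_5 (K M : ℕ) (hK : 0 < K) (hM : 0 < M)
    (p : Fin K → ℝ) (hp : ∀ x, 0 < p x) (hpsum : ∑ x, p x = 1)
    (W : Fin K → Fin K → ℝ) (hW : ∀ x y, 0 < W x y) (hWsum : ∀ x, ∑ y, W x y = 1)
    (ρ : Fin K → Fin K → ℝ) (hρ : ∀ x xh, 0 ≤ ρ x xh)
    (pz : Fin K → Fin M → ℝ) (hpz0 : ∀ x z, 0 ≤ pz x z) (hpz1 : ∀ x, ∑ z, pz x z = 1)
    (g : Fin M → Fin K → Fin K)
    (D : ℝ) (hD : D = ∑ x, ∑ y, ∑ z, p x * W x y * pz x z * ρ x (g z y))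
    (pY : Fin K → ℝ) (hpY : ∀ y, pY y = ∑ x, p x * W x y)
    (pYZ : Fin K → Fin M → ℝ)
    (hpYZ : ∀ y z, pYZ y z = ∑ x, p x * W x y * pz x z) :
    sInf { r : ℝ | ∃ pc : Fin K → Fin K → ℝ,
        (∀ x xh, 0 ≤ pc x xh) ∧ (∀ x, ∑ xh, pc x xh = 1) ∧
        (∑ x, ∑ xh, p x * pc x xh * ρ x xh ≤ D) ∧
        r = ∑ x, ∑ xh, p x * pc x xh *
            Real.logb 2 (pc x xh / (∑ x', p x' * pc x' xh)) }
      ≤ (∑ x, ∑ y, p x * W x y * Real.logb 2 (W x y / pY y))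
        + (- ∑ y, ∑ z, pYZ y z * Real.logb 2 (pYZ y z / pY y))
        - (- ∑ x, ∑ z, p x * pz x z * Real.logb 2 (pz x z)) := by
  classical
  have h2 : (0:ℝ) < Real.log 2 := Real.log_pos one_lt_two
  -- the test channel
  set pc : Fin K → Fin K → ℝ := fun x xh => ∑ y, ∑ z, if g z y = xh then W x y * pz x z else 0 with hpcdef
  set q : Fin K → ℝ := fun xh => ∑ x', p x' * pc x' xh with hqdef
  have hpc0 : ∀ x xh, 0 ≤ pc x xh := by
    intro x xh
    refine Finset.sum_nonneg fun y _ => Finset.sum_nonneg fun z _ => ?_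
    split
    · exact mul_nonneg (hW x y).le (hpz0 x z)
    · exact le_refl 0
  have collapse : ∀ (F : Fin K → Fin M → Fin K → ℝ),
      ∑ xh : Fin K, ∑ y : Fin K, ∑ z : Fin M, (if g z y = xh then F y z xh else 0)
        = ∑ y, ∑ z, F y z (g z y) := by
    intro F
    rw [Finset.sum_comm]
    refine Finset.sum_congr rfl fun y _ => ?_
    rw [Finset.sum_comm]
    simp [Finset.sum_ite_eq]
  have hpc1 : ∀ x, ∑ xh, pc x xh = 1 := by
    intro x
    simp only [hpcdef]
    rw [collapse (fun y z _ => W x y * pz x z)]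
    simp [← Finset.mul_sum, hpz1, hWsum]
  have hq0 : ∀ xh, 0 ≤ q xh := fun xh =>
    Finset.sum_nonneg fun x _ => mul_nonneg (hp x).le (hpc0 x xh)
  have hpc_expand : ∀ (x xh : Fin K) (c : ℝ), p x * pc x xh * c
      = ∑ y, ∑ z, (if g z y = xh then p x * (W x y * pz x z) * c else 0) := by
    intro x xh c
    rw [hpcdef]
    simp only [Finset.mul_sum, Finset.sum_mul, mul_ite, ite_mul, mul_zero, zero_mul]
  have hdist : ∑ x, ∑ xh, p x * pc x xh * ρ x xh = D := by
    rw [hD]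
    refine Finset.sum_congr rfl fun x _ => ?_
    calc ∑ xh, p x * pc x xh * ρ x xh
        = ∑ xh, ∑ y, ∑ z, (if g z y = xh then p x * (W x y * pz x z) * ρ x xh else 0) :=
          Finset.sum_congr rfl fun xh _ => hpc_expand x xh (ρ x xh)
      _ = ∑ y, ∑ z, p x * (W x y * pz x z) * ρ x (g z y) :=
          collapse fun y z xh => p x * (W x y * pz x z) * ρ x xh
      _ = ∑ y, ∑ z, p x * W x y * pz x z * ρ x (g z y) :=
          Finset.sum_congr rfl fun y _ => Finset.sum_congr rfl fun z _ => by ring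
  have hA : ∑ x, ∑ xh, p x * pc x xh * Real.logb 2 (pc x xh / q xh)
      = ∑ x, ∑ y, ∑ z, p x * W x y * pz x z
          * Real.logb 2 (pc x (g z y) / q (g z y)) := by
    refine Finset.sum_congr rfl fun x _ => ?_
    calc ∑ xh, p x * pc x xh * Real.logb 2 (pc x xh / q xh)
        = ∑ xh, ∑ y, ∑ z, (if g z y = xh then
            p x * (W x y * pz x z) * Real.logb 2 (pc x xh / q xh) else 0) :=
          Finset.sum_congr rfl fun xh _ => hpc_expand x xh _
      _ = ∑ y, ∑ z, p x * (W x y * pz x z) * Real.logb 2 (pc x (g z y) / q (g z y)) :=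
          collapse fun y z xh => p x * (W x y * pz x z) * Real.logb 2 (pc x xh / q xh)
      _ = ∑ y, ∑ z, p x * W x y * pz x z * Real.logb 2 (pc x (g z y) / q (g z y)) :=
          Finset.sum_congr rfl fun y _ => Finset.sum_congr rfl fun z _ => by ring
  have hsum_pYZ : ∑ y, ∑ z, pYZ y z = 1 := by
    simp only [hpYZ]
    have h1 : ∀ y : Fin K, ∑ z : Fin M, ∑ x : Fin K, p x * W x y * pz x z
        = ∑ x : Fin K, ∑ z : Fin M, p x * W x y * pz x z := fun y => Finset.sum_comm
    simp only [h1]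
    rw [Finset.sum_comm]
    simp only [mul_assoc, ← Finset.mul_sum, hpz1, mul_one, hWsum, hpsum]
  have hsum_a : ∑ x, ∑ y, ∑ z, p x * W x y * pz x z = 1 := by
    simp only [mul_assoc, ← Finset.mul_sum, hpz1, mul_one, hWsum, hpsum]
  have hpYZ0 : ∀ y z, 0 ≤ pYZ y z := by
    intro y z; rw [hpYZ]
    exact Finset.sum_nonneg fun x _ =>
      mul_nonneg (mul_nonneg (hp x).le (hW x y).le) (hpz0 x z)
  have hpYZpos : ∀ x y z, pz x z ≠ 0 → 0 < pYZ y z := by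
    intro x y z hz
    have hzpos : 0 < pz x z := lt_of_le_of_ne (hpz0 x z) (Ne.symm hz)
    rw [hpYZ]
    have hle : p x * W x y * pz x z ≤ ∑ x', p x' * W x' y * pz x' z :=
      Finset.single_le_sum (fun x' _ =>
        mul_nonneg (mul_nonneg (hp x').le (hW x' y).le) (hpz0 x' z)) (Finset.mem_univ x)
    nlinarith [mul_pos (mul_pos (hp x) (hW x y)) hzpos]
  have hpcpos : ∀ x y z, pz x z ≠ 0 → 0 < pc x (g z y) := by
    intro x y z hz
    have hzpos : 0 < pz x z := lt_of_le_of_ne (hpz0 x z) (Ne.symm hz)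
    have h1 : (∑ z', if g z' y = g z y then W x y * pz x z' else 0) ≤ pc x (g z y) := by
      rw [hpcdef]
      exact Finset.single_le_sum (f := fun y' => ∑ z',
          if g z' y' = g z y then W x y' * pz x z' else 0)
        (fun y' _ => Finset.sum_nonneg fun z' _ => by
          split
          · exact mul_nonneg (hW x y').le (hpz0 x z')
          · exact le_rfl) (Finset.mem_univ y)
    have h2 : W x y * pz x z ≤ ∑ z', if g z' y = g z y then W x y * pz x z' else 0 := by
      have := Finset.single_le_sum (f := fun z' =>
          if g z' y = g z y then W x y * pz x z' else 0)
        (fun z' _ => by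
          split
          · exact mul_nonneg (hW x y).le (hpz0 x z')
          · exact le_rfl) (Finset.mem_univ z)
      simpa using this
    exact lt_of_lt_of_le (mul_pos (hW x y) hzpos) (h2.trans h1)
  have hqpos : ∀ x y z, pz x z ≠ 0 → 0 < q (g z y) := by
    intro x y z hz
    have hle : p x * pc x (g z y) ≤ ∑ x', p x' * pc x' (g z y) :=
      Finset.single_le_sum (f := fun x' => p x' * pc x' (g z y))
        (fun x' _ => mul_nonneg (hp x').le (hpc0 x' (g z y))) (Finset.mem_univ x)
    rw [hqdef]
    exact lt_of_lt_of_le (mul_pos (hp x) (hpcpos x y z hz)) hle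
  set b : Fin K → Fin K → Fin M → ℝ :=
      fun x y z => pYZ y z * (p x * pc x (g z y) / q (g z y)) with hbdef
  have hb0 : ∀ x y z, 0 ≤ b x y z := fun x y z =>
    mul_nonneg (hpYZ0 y z)
      (div_nonneg (mul_nonneg (hp x).le (hpc0 x (g z y))) (hq0 (g z y)))
  have hterm : ∀ (x y : Fin K) (z : Fin M),
      (Real.log 2)⁻¹ * (p x * W x y * pz x z - b x y z)
        ≤ p x * W x y * pz x z * Real.logb 2 (W x y * pz x z / pYZ y z)
          - p x * W x y * pz x z * Real.logb 2 (pc x (g z y) / q (g z y)) := by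
    intro x y z
    rcases eq_or_ne (pz x z) 0 with hz | hz
    · have hbn := hb0 x y z
      have hinv := inv_pos.mpr h2
      simp only [hz, mul_zero, zero_mul, zero_sub, sub_zero]
      nlinarith
    · have hzpos : 0 < pz x z := lt_of_le_of_ne (hpz0 x z) (Ne.symm hz)
      have hwz : 0 < W x y * pz x z := mul_pos (hW x y) hzpos
      have hYZ := hpYZpos x y z hz
      have hpcp := hpcpos x y z hz
      have hqp := hqpos x y z hz
      have ha : 0 < p x * W x y * pz x z := mul_pos (mul_pos (hp x) (hW x y)) hzpos
      have hbpos : 0 < b x y z := by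
        rw [hbdef]
        exact mul_pos hYZ (div_pos (mul_pos (hp x) hpcp) hqp)
      have hlogb : Real.logb 2 (W x y * pz x z / pYZ y z)
            - Real.logb 2 (pc x (g z y) / q (g z y))
          = Real.logb 2 ((p x * W x y * pz x z) / b x y z) := by
        rw [← Real.logb_div (ne_of_gt (div_pos hwz hYZ)) (ne_of_gt (div_pos hpcp hqp))]
        congr 1
        rw [hbdef]
        field_simp [ne_of_gt (hp x), ne_of_gt hYZ, ne_of_gt hpcp, ne_of_gt hqp]
      have hkey := logb_term_ge (p x * W x y * pz x z) (b x y z) ha.le hbpos.le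
        (fun _ => hbpos)
      calc (Real.log 2)⁻¹ * (p x * W x y * pz x z - b x y z)
          ≤ (p x * W x y * pz x z) * Real.logb 2 ((p x * W x y * pz x z) / b x y z) :=
            hkey
        _ = p x * W x y * pz x z * Real.logb 2 (W x y * pz x z / pYZ y z)
            - p x * W x y * pz x z * Real.logb 2 (pc x (g z y) / q (g z y)) := by
            rw [← hlogb]; ring
  have hsum_b : ∑ x, ∑ y, ∑ z, b x y z ≤ 1 := by
    have hre : ∑ x : Fin K, ∑ y : Fin K, ∑ z : Fin M, b x y z
        = ∑ y : Fin K, ∑ z : Fin M, ∑ x : Fin K, b x y z := by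
      rw [Finset.sum_comm]
      exact Finset.sum_congr rfl fun y _ => Finset.sum_comm
    rw [hre, ← hsum_pYZ]
    refine Finset.sum_le_sum fun y _ => Finset.sum_le_sum fun z _ => ?_
    have hx : ∑ x, b x y z = pYZ y z * (q (g z y) / q (g z y)) := by
      simp only [hbdef]
      rw [← Finset.mul_sum, ← Finset.sum_div]
    rcases eq_or_ne (q (g z y)) 0 with h | h
    · rw [hx, h]
      simpa using hpYZ0 y z
    · rw [hx, div_self h, mul_one]
  set T : ℝ := ∑ x, ∑ y, ∑ z, p x * W x y * pz x z
      * Real.logb 2 (W x y * pz x z / pYZ y z) with hTdef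
  have hRT : ∑ x, ∑ xh, p x * pc x xh * Real.logb 2 (pc x xh / q xh) ≤ T := by
    rw [hA]
    have hsum := Finset.sum_le_sum (s := Finset.univ) fun x _ =>
      Finset.sum_le_sum (s := Finset.univ) fun y _ =>
        Finset.sum_le_sum (s := Finset.univ) fun z _ => hterm x y z
    have hL : ∑ x, ∑ y, ∑ z, (Real.log 2)⁻¹ * (p x * W x y * pz x z - b x y z)
        = (Real.log 2)⁻¹ * ((∑ x, ∑ y, ∑ z, p x * W x y * pz x z)
            - ∑ x, ∑ y, ∑ z, b x y z) := by
      simp only [← Finset.mul_sum, Finset.sum_sub_distrib]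
    have hRsplit : ∑ x, ∑ y, ∑ z,
        (p x * W x y * pz x z * Real.logb 2 (W x y * pz x z / pYZ y z)
          - p x * W x y * pz x z * Real.logb 2 (pc x (g z y) / q (g z y)))
        = T - ∑ x, ∑ y, ∑ z, p x * W x y * pz x z
            * Real.logb 2 (pc x (g z y) / q (g z y)) := by
      rw [hTdef]
      simp only [Finset.sum_sub_distrib]
    rw [hL, hRsplit] at hsum
    have hinv := inv_pos.mpr h2
    have h0 : 0 ≤ (Real.log 2)⁻¹ * ((∑ x, ∑ y, ∑ z, p x * W x y * pz x z)
        - ∑ x, ∑ y, ∑ z, b x y z) := by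
      rw [hsum_a]
      nlinarith [hsum_b]
    linarith
  have hpYpos : ∀ y, 0 < pY y := by
    intro y
    rw [hpY]
    have hx0 : Fin K := ⟨0, hK⟩
    exact lt_of_lt_of_le (mul_pos (hp hx0) (hW hx0 y))
      (Finset.single_le_sum (f := fun x => p x * W x y)
        (fun x _ => mul_nonneg (hp x).le (hW x y).le) (Finset.mem_univ hx0))
  have hterm2 : ∀ (x y : Fin K) (z : Fin M),
      p x * W x y * pz x z * Real.logb 2 (W x y * pz x z / pYZ y z)
      = p x * W x y * pz x z * Real.logb 2 (W x y / pY y)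
        + p x * W x y * pz x z * Real.logb 2 (pz x z)
        - p x * W x y * pz x z * Real.logb 2 (pYZ y z / pY y) := by
    intro x y z
    rcases eq_or_ne (pz x z) 0 with hz | hz
    · simp [hz]
    · have hzpos : 0 < pz x z := lt_of_le_of_ne (hpz0 x z) (Ne.symm hz)
      have hYZ := hpYZpos x y z hz
      have key : Real.logb 2 (W x y * pz x z / pYZ y z)
          = Real.logb 2 (W x y / pY y) + Real.logb 2 (pz x z)
            - Real.logb 2 (pYZ y z / pY y) := by
        rw [Real.logb_div (ne_of_gt (mul_pos (hW x y) hzpos)) (ne_of_gt hYZ),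
            Real.logb_mul (ne_of_gt (hW x y)) hz,
            Real.logb_div (ne_of_gt (hW x y)) (ne_of_gt (hpYpos y)),
            Real.logb_div (ne_of_gt hYZ) (ne_of_gt (hpYpos y))]
        ring
      rw [key]; ring
  have hS1 : ∀ x y : Fin K, ∑ z : Fin M,
      p x * W x y * pz x z * Real.logb 2 (W x y / pY y)
      = p x * W x y * Real.logb 2 (W x y / pY y) := by
    intro x y
    calc ∑ z, p x * W x y * pz x z * Real.logb 2 (W x y / pY y)
        = ∑ z, (p x * W x y * Real.logb 2 (W x y / pY y)) * pz x z :=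
          Finset.sum_congr rfl fun z _ => by ring
      _ = (p x * W x y * Real.logb 2 (W x y / pY y)) * ∑ z, pz x z :=
          (Finset.mul_sum _ _ _).symm
      _ = p x * W x y * Real.logb 2 (W x y / pY y) := by rw [hpz1, mul_one]
  have hS2 : ∀ x : Fin K, ∑ y : Fin K, ∑ z : Fin M,
      p x * W x y * pz x z * Real.logb 2 (pz x z)
      = ∑ z : Fin M, p x * pz x z * Real.logb 2 (pz x z) := by
    intro x
    rw [Finset.sum_comm]
    refine Finset.sum_congr rfl fun z _ => ?_
    calc ∑ y, p x * W x y * pz x z * Real.logb 2 (pz x z)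
        = ∑ y, (p x * pz x z * Real.logb 2 (pz x z)) * W x y :=
          Finset.sum_congr rfl fun y _ => by ring
      _ = (p x * pz x z * Real.logb 2 (pz x z)) * ∑ y, W x y :=
          (Finset.mul_sum _ _ _).symm
      _ = p x * pz x z * Real.logb 2 (pz x z) := by rw [hWsum, mul_one]
  have hS3 : ∑ x : Fin K, ∑ y : Fin K, ∑ z : Fin M,
      p x * W x y * pz x z * Real.logb 2 (pYZ y z / pY y)
      = ∑ y : Fin K, ∑ z : Fin M, pYZ y z * Real.logb 2 (pYZ y z / pY y) := by
    rw [Finset.sum_comm]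
    refine Finset.sum_congr rfl fun y _ => ?_
    rw [Finset.sum_comm]
    refine Finset.sum_congr rfl fun z _ => ?_
    calc ∑ x, p x * W x y * pz x z * Real.logb 2 (pYZ y z / pY y)
        = (∑ x, p x * W x y * pz x z) * Real.logb 2 (pYZ y z / pY y) :=
          (Finset.sum_mul _ _ _).symm
      _ = pYZ y z * Real.logb 2 (pYZ y z / pY y) := by rw [← hpYZ]
  have hTRHS : T = (∑ x, ∑ y, p x * W x y * Real.logb 2 (W x y / pY y))
      + (- ∑ y, ∑ z, pYZ y z * Real.logb 2 (pYZ y z / pY y))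
      - (- ∑ x, ∑ z, p x * pz x z * Real.logb 2 (pz x z)) := by
    rw [hTdef]
    calc ∑ x, ∑ y, ∑ z, p x * W x y * pz x z
          * Real.logb 2 (W x y * pz x z / pYZ y z)
        = ∑ x, ∑ y, ∑ z, (p x * W x y * pz x z * Real.logb 2 (W x y / pY y)
            + p x * W x y * pz x z * Real.logb 2 (pz x z)
            - p x * W x y * pz x z * Real.logb 2 (pYZ y z / pY y)) :=
          Finset.sum_congr rfl fun x _ => Finset.sum_congr rfl fun y _ =>
            Finset.sum_congr rfl fun z _ => hterm2 x y z
      _ = (∑ x, ∑ y, ∑ z, p x * W x y * pz x z * Real.logb 2 (W x y / pY y))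
          + (∑ x, ∑ y, ∑ z, p x * W x y * pz x z * Real.logb 2 (pz x z))
          - ∑ x, ∑ y, ∑ z, p x * W x y * pz x z * Real.logb 2 (pYZ y z / pY y) := by
          simp only [Finset.sum_sub_distrib, Finset.sum_add_distrib]
      _ = (∑ x, ∑ y, p x * W x y * Real.logb 2 (W x y / pY y))
          + (- ∑ y, ∑ z, pYZ y z * Real.logb 2 (pYZ y z / pY y))
          - (- ∑ x, ∑ z, p x * pz x z * Real.logb 2 (pz x z)) := by
          rw [hS3]
          rw [Finset.sum_congr rfl fun x (_ : x ∈ Finset.univ) =>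
            Finset.sum_congr rfl fun y (_ : y ∈ Finset.univ) => hS1 x y]
          rw [Finset.sum_congr rfl fun x (_ : x ∈ Finset.univ) => hS2 x]
          ring
  have hbdd : BddBelow { r : ℝ | ∃ pc : Fin K → Fin K → ℝ,
      (∀ x xh, 0 ≤ pc x xh) ∧ (∀ x, ∑ xh, pc x xh = 1) ∧
      (∑ x, ∑ xh, p x * pc x xh * ρ x xh ≤ D) ∧
      r = ∑ x, ∑ xh, p x * pc x xh *
          Real.logb 2 (pc x xh / (∑ x', p x' * pc x' xh)) } := by
    refine ⟨0, fun r hr => ?_⟩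
    obtain ⟨pcc, hpcc0, hpcc1, -, hrw⟩ := hr
    have hqq0 : ∀ xh, 0 ≤ ∑ x', p x' * pcc x' xh := fun xh =>
      Finset.sum_nonneg fun x' _ => mul_nonneg (hp x').le (hpcc0 x' xh)
    have hterm3 : ∀ x xh : Fin K,
        (Real.log 2)⁻¹ * (p x * pcc x xh - p x * (∑ x', p x' * pcc x' xh))
          ≤ p x * pcc x xh * Real.logb 2 (pcc x xh / (∑ x', p x' * pcc x' xh)) := by
      intro x xh
      have heq : pcc x xh / (∑ x', p x' * pcc x' xh)
          = (p x * pcc x xh) / (p x * (∑ x', p x' * pcc x' xh)) :=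
        (mul_div_mul_left _ _ (ne_of_gt (hp x))).symm
      rw [heq]
      refine logb_term_ge _ _ (mul_nonneg (hp x).le (hpcc0 x xh))
        (mul_nonneg (hp x).le (hqq0 xh)) ?_
      intro hne
      have hpccne : pcc x xh ≠ 0 := fun h => hne (by rw [h, mul_zero])
      have hpccpos : 0 < pcc x xh := lt_of_le_of_ne (hpcc0 x xh) (Ne.symm hpccne)
      have hle : p x * pcc x xh ≤ ∑ x', p x' * pcc x' xh :=
        Finset.single_le_sum (f := fun x' => p x' * pcc x' xh)
          (fun x' _ => mul_nonneg (hp x').le (hpcc0 x' xh)) (Finset.mem_univ x)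
      exact mul_pos (hp x) (lt_of_lt_of_le (mul_pos (hp x) hpccpos) hle)
    have hsa : ∑ x, ∑ xh, p x * pcc x xh = 1 := by
      simp only [← Finset.mul_sum, hpcc1, mul_one, hpsum]
    have hsq : ∑ xh : Fin K, ∑ x' : Fin K, p x' * pcc x' xh = 1 := by
      rw [Finset.sum_comm]
      simp only [← Finset.mul_sum, hpcc1, mul_one, hpsum]
    have hsb : ∑ x, ∑ xh : Fin K, p x * (∑ x', p x' * pcc x' xh) = 1 := by
      simp only [← Finset.mul_sum]
      rw [Finset.sum_congr rfl fun x (_ : x ∈ Finset.univ) => by rw [hsq]]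
      simp [hpsum]
    have hsum3 := Finset.sum_le_sum (s := Finset.univ) fun x _ =>
      Finset.sum_le_sum (s := Finset.univ) fun xh _ => hterm3 x xh
    have hLL : ∑ x, ∑ xh, (Real.log 2)⁻¹
        * (p x * pcc x xh - p x * (∑ x', p x' * pcc x' xh))
        = (Real.log 2)⁻¹ * ((∑ x, ∑ xh, p x * pcc x xh)
            - ∑ x, ∑ xh : Fin K, p x * (∑ x', p x' * pcc x' xh)) := by
      simp only [← Finset.mul_sum, Finset.sum_sub_distrib]
    rw [hLL, hsa, hsb] at hsum3
    simpa [hrw] using hsum3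
  have hmem : (∑ x, ∑ xh, p x * pc x xh * Real.logb 2 (pc x xh / q xh))
      ∈ { r : ℝ | ∃ pc : Fin K → Fin K → ℝ,
      (∀ x xh, 0 ≤ pc x xh) ∧ (∀ x, ∑ xh, pc x xh = 1) ∧
      (∑ x, ∑ xh, p x * pc x xh * ρ x xh ≤ D) ∧
      r = ∑ x, ∑ xh, p x * pc x xh *
          Real.logb 2 (pc x xh / (∑ x', p x' * pc x' xh)) } :=
    ⟨pc, hpc0, hpc1, le_of_eq hdist, by rw [hqdef]⟩
  calc sInf { r : ℝ | ∃ pc : Fin K → Fin K → ℝ,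
      (∀ x xh, 0 ≤ pc x xh) ∧ (∀ x, ∑ xh, pc x xh = 1) ∧
      (∑ x, ∑ xh, p x * pc x xh * ρ x xh ≤ D) ∧
      r = ∑ x, ∑ xh, p x * pc x xh *
          Real.logb 2 (pc x xh / (∑ x', p x' * pc x' xh)) }
      ≤ ∑ x, ∑ xh, p x * pc x xh * Real.logb 2 (pc x xh / q xh) :=
        csInf_le hbdd hmem
    _ ≤ T := hRT
    _ = (∑ x, ∑ y, p x * W x y * Real.logb 2 (W x y / pY y))
        + (- ∑ y, ∑ z, pYZ y z * Real.logb 2 (pYZ y z / pY y))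
        - (- ∑ x, ∑ z, p x * pz x z * Real.logb 2 (pz x z)) := hTRHS
end

section
/- Let p be a pmf on the finite alphabet 𝒳={1,…,K} with p(x)>0 for all x, let p(y|x) be a channel with p(y|x)>0 for all x,y∈𝒳, and let f:𝒳→{1,…,M} be any encoder with cells A_z=f⁻¹(z). Then for every real α with 1<α<2, Σ_{x,y} p(x)·p(y|x)^α · ( Σ_{x'∈A_{f(x)}} p(x')p(y|x') )^{1−α} ≤ M^{α−1} · Σ_y ( Σ_x p(x)·p(y|x)^{1/(2−α)} )^{2−α}. -/
open Finset Real

/-!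
Fix the output `y` and write `S_z = ∑_{x ∈ A_z} p(x) W(y|x)` and
`T_z = ∑_{x ∈ A_z} p(x) W(y|x)^{1/(2-α)}`. Since `W^α = W^{α-1} · W` and
`(W^{α-1})^{1/(2-α)} · W = W^{1/(2-α)}`, Hölder's inequality with exponents `1/(α-1)` and
`1/(2-α)` and weights `p W` gives `∑_{x ∈ A_z} p W^α ≤ S_z^{α-1} T_z^{2-α}`, so the
contribution of the cell `A_z` is at most `T_z^{2-α}`. Concavity of `t ↦ t^{2-α}` over the
`M` cells then yields `∑_z T_z^{2-α} ≤ M^{α-1} (∑_z T_z)^{2-α}`, and `∑_z T_z` is the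
unpartitioned sum.
-/

lemma sum_rpow_le_card_rpow_mul_rpow_sum {ι : Type*} (s : Finset ι) {f : ι → ℝ}
    (hf : ∀ i, 0 ≤ f i) {q : ℝ} (hq₀ : 0 < q) (hq₁ : q ≤ 1) :
    ∑ i ∈ s, f i ^ q ≤ (#s : ℝ) ^ (1 - q) * (∑ i ∈ s, f i) ^ q := by
  have h := inner_le_weight_mul_Lp_of_nonneg s ((one_le_inv₀ hq₀).2 hq₁) (fun _ => 1)
    (fun i => f i ^ q) (fun _ => zero_le_one) (fun i => rpow_nonneg (hf i) _)
  simpa [← rpow_mul (hf _), hq₀.ne'] using h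

lemma sum_mul_rpow_le_moment_interpolation {ι : Type*} (s : Finset ι) {a w : ι → ℝ}
    (ha : ∀ i, 0 ≤ a i) (hw : ∀ i, 0 ≤ w i) {α : ℝ} (hα₁ : 1 ≤ α) (hα₂ : α < 2) :
    ∑ i ∈ s, a i * w i ^ α ≤
      (∑ i ∈ s, a i * w i) ^ (α - 1) * (∑ i ∈ s, a i * w i ^ (1 / (2 - α))) ^ (2 - α) := by
  have hγ : 0 < 2 - α := by linarith
  have h := inner_le_weight_mul_Lp_of_nonneg s (p := 1 / (2 - α))
    ((one_le_div hγ).2 (by linarith)) (fun i => a i * w i) (fun i => w i ^ (α - 1))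
    (fun i => mul_nonneg (ha i) (hw i)) (fun i => rpow_nonneg (hw i) _)
  have hα : ∀ i, a i * w i * w i ^ (α - 1) = a i * w i ^ α := fun i => by
    rw [mul_assoc, ← rpow_one_add' (hw i) (by linarith), add_sub_cancel]
  have hγ' : ∀ i, a i * w i * (w i ^ (α - 1)) ^ (1 / (2 - α)) = a i * w i ^ (1 / (2 - α)) :=
    fun i => by
      rw [← rpow_mul (hw i), mul_assoc, ← rpow_one_add' (hw i) (by positivity)]
      congr 2
      field_simp
      ring
  simp only [hα, hγ'] at h
  rwa [inv_div, div_one, show 1 - (2 - α) = α - 1 by ring] at h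

lemma sum_mul_rpow_mul_rpow_sum_fiber_le {ι κ : Type*} [Fintype ι] [Fintype κ] [DecidableEq κ]
    (g : ι → κ) {a w : ι → ℝ} (ha : ∀ i, 0 ≤ a i) (hw : ∀ i, 0 ≤ w i) {α : ℝ}
    (hα₁ : 1 ≤ α) (hα₂ : α < 2) :
    ∑ x, a x * w x ^ α * (∑ x' ∈ univ.filter (fun x' => g x' = g x), a x' * w x') ^ (1 - α)
      ≤ (Fintype.card κ : ℝ) ^ (α - 1) * (∑ x, a x * w x ^ (1 / (2 - α))) ^ (2 - α) := by
  set S : κ → ℝ := fun z => ∑ x ∈ univ.filter (fun x => g x = z), a x * w x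
  set T : κ → ℝ := fun z => ∑ x ∈ univ.filter (fun x => g x = z), a x * w x ^ (1 / (2 - α))
  have hS : ∀ z, 0 ≤ S z := fun z => sum_nonneg fun x _ => mul_nonneg (ha x) (hw x)
  have hT : ∀ z, 0 ≤ T z := fun z => sum_nonneg fun x _ => mul_nonneg (ha x) (rpow_nonneg (hw x) _)
  have hcell : ∀ z, (∑ x ∈ univ.filter (fun x => g x = z), a x * w x ^ α) * S z ^ (1 - α)
      ≤ T z ^ (2 - α) := fun z => by
    -- the product is `1` unless `S z = 0`, when it is `0` (recall `0 ^ (α - 1) = 0` for `α > 1`)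
    have hSS : S z ^ (α - 1) * S z ^ (1 - α) ≤ 1 := by
      rw [show 1 - α = -(α - 1) by ring, rpow_neg (hS z)]
      exact mul_inv_le_one
    calc (∑ x ∈ univ.filter (fun x => g x = z), a x * w x ^ α) * S z ^ (1 - α)
        ≤ S z ^ (α - 1) * T z ^ (2 - α) * S z ^ (1 - α) :=
          mul_le_mul_of_nonneg_right (sum_mul_rpow_le_moment_interpolation _ ha hw hα₁ hα₂)
            (rpow_nonneg (hS z) _)
      _ = S z ^ (α - 1) * S z ^ (1 - α) * T z ^ (2 - α) := by ring
      _ ≤ T z ^ (2 - α) := mul_le_of_le_one_left (rpow_nonneg (hT z) _) hSS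
  calc ∑ x, a x * w x ^ α * S (g x) ^ (1 - α)
      = ∑ z, (∑ x ∈ univ.filter (fun x => g x = z), a x * w x ^ α) * S z ^ (1 - α) := by
        rw [← sum_fiberwise univ g]
        refine sum_congr rfl fun z _ => ?_
        rw [sum_mul]
        exact sum_congr rfl fun x hx => by rw [(mem_filter.mp hx).2]
    _ ≤ ∑ z, T z ^ (2 - α) := sum_le_sum fun z _ => hcell z
    _ ≤ (Fintype.card κ : ℝ) ^ (α - 1) * (∑ z, T z) ^ (2 - α) := by
        simpa [show 1 - (2 - α) = α - 1 by ring] using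
          sum_rpow_le_card_rpow_mul_rpow_sum univ hT (q := 2 - α) (by linarith) (by linarith)
    _ = (Fintype.card κ : ℝ) ^ (α - 1) * (∑ x, a x * w x ^ (1 / (2 - α))) ^ (2 - α) := by
        rw [sum_fiberwise]

theorem stmt_6_general (K M : ℕ)
    (p : Fin K → ℝ) (hp : ∀ x, 0 < p x)
    (W : Fin K → Fin K → ℝ) (hW : ∀ x y, 0 < W x y)
    (f : Fin K → Fin M) (α : ℝ) (hα1 : 1 < α) (hα2 : α < 2) :
    ∑ x, ∑ y, p x * (W x y) ^ α *
        (∑ x' ∈ Finset.univ.filter (fun x' => f x' = f x), p x' * W x' y) ^ (1 - α)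
      ≤ (M:ℝ) ^ (α - 1) * ∑ y, (∑ x, p x * (W x y) ^ (1/(2-α))) ^ (2-α) := by
  rw [sum_comm, mul_sum]
  refine sum_le_sum fun y _ => ?_
  simpa only [Fintype.card_fin] using
    sum_mul_rpow_mul_rpow_sum_fiber_le f (fun x => (hp x).le) (fun x => (hW x y).le) hα1.le hα2

/-- Hölder upper bound on the generalized mutual information `I^Q(X;(Y,Z))` for
`Q(t) = t^{1-α}`, `1 < α < 2`, valid for every deterministic encoder `f`. -/
theorem stmt_6 (K M : ℕ) (hK : 0 < K) (hM : 0 < M)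
    (p : Fin K → ℝ) (hp : ∀ x, 0 < p x) (hpsum : ∑ x, p x = 1)
    (W : Fin K → Fin K → ℝ) (hW : ∀ x y, 0 < W x y) (hWsum : ∀ x, ∑ y, W x y = 1)
    (f : Fin K → Fin M) (α : ℝ) (hα1 : 1 < α) (hα2 : α < 2) :
    ∑ x, ∑ y, p x * (W x y) ^ α *
        (∑ x' ∈ Finset.univ.filter (fun x' => f x' = f x), p x' * W x' y) ^ (1 - α)
      ≤ (M:ℝ) ^ (α - 1) * ∑ y, (∑ x, p x * (W x y) ^ (1/(2-α))) ^ (2-α) :=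
  stmt_6_general K M p hp W hW f α hα1 hα2
end

section
/- Let p be a pmf on 𝒳={1,…,K} with p(x)>0 for all x, let p(y|x) be a channel with p(y|x)>0 for all x,y, and let M be a positive real. Then lim_{α→1} (1/(α−1)) · log₂( M^{α−1} · Σ_y ( Σ_x p(x)·p(y|x)^{1/(2−α)} )^{2−α} ) = log₂ M + I(X;Y), where I(X;Y)=Σ_{x,y} p(x)p(y|x) log₂( p(y|x)/p(y) ) with p(y)=Σ_x p(x)p(y|x), and the limit is over α≠1 approaching 1. -/
/-!
Write `S α = ∑_y (∑_x p(x) W(y|x)^{1/(2-α)})^{2-α}`. Since `S 1 = 1`, the expression is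
`log₂ M + (log₂ S α - log₂ S 1) / (α - 1)`, a difference quotient, so its limit is
`log₂ M + S'(1) / ln 2`. Differentiating the inner and outer powers at `α = 1` gives
`S'(1) = ∑_y (∑_x p(x) W(y|x) ln W(y|x) - p(y) ln p(y))`, which is `I(X;Y) · ln 2`.
-/

open Filter Topology Real

theorem hasDerivAt_rpow_one_div_two_sub {w : ℝ} (hw : 0 < w) :
    HasDerivAt (fun α : ℝ => w ^ (1 / (2 - α))) (w * log w) 1 := by
  have hexp : HasDerivAt (fun α : ℝ => 1 / (2 - α)) 1 1 := by
    simpa only [one_div] using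
      (((hasDerivAt_id' (1 : ℝ)).const_sub 2).fun_inv (by norm_num)).congr_deriv (by norm_num)
  exact ((hasDerivAt_const 1 w).rpow hexp hw).congr_deriv (by norm_num)

theorem HasDerivAt.rpow_two_sub {T : ℝ → ℝ} {T' : ℝ} (hT : HasDerivAt T T' 1) (hT1 : 0 < T 1) :
    HasDerivAt (fun α => T α ^ (2 - α)) (T' - T 1 * Real.log (T 1)) 1 :=
  (hT.rpow ((hasDerivAt_const (1 : ℝ) 2).sub (hasDerivAt_id 1)) hT1).congr_deriv
    (by norm_num [sub_eq_add_neg])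

theorem tendsto_logb_rpow_mul_div_sub_one (b : ℝ) {M : ℝ} (hM : 0 < M) {S : ℝ → ℝ} {D : ℝ}
    (hS : HasDerivAt S D 1) (hS1 : S 1 = 1) :
    Tendsto (fun α => (1 / (α - 1)) * logb b (M ^ (α - 1) * S α)) (𝓝[≠] 1)
      (𝓝 (logb b M + D / log b)) := by
  have hlogS : HasDerivAt (fun α => logb b (S α)) (D / log b) 1 := by
    simpa only [logb, hS1, div_one] using (hS.log (by simp [hS1])).div_const (log b)
  refine (tendsto_const_nhds.add (hasDerivAt_iff_tendsto_slope.mp hlogS)).congr' ?_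
  have hS_ne : ∀ᶠ α in 𝓝[≠] (1 : ℝ), S α ≠ 0 :=
    nhdsWithin_le_nhds (hS.continuousAt.eventually_ne (by simp [hS1]))
  filter_upwards [self_mem_nhdsWithin, hS_ne] with α (hα : α ≠ 1) hSα
  have hα1 : α - 1 ≠ 0 := sub_ne_zero.mpr hα
  rw [slope_def_field, logb_mul (rpow_pos_of_pos hM _).ne' hSα, logb_rpow_eq_mul_logb_of_pos hM,
    hS1, logb_one]
  field_simp
  ring

theorem sum_mul_logb_div_marginal {ι κ : Type*} [Fintype ι] [Fintype κ] (b : ℝ)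
    (p : ι → ℝ) (W : ι → κ → ℝ) (hW : ∀ x y, W x y ≠ 0) (pY : κ → ℝ) (hpY0 : ∀ y, pY y ≠ 0)
    (hpY : ∀ y, pY y = ∑ x, p x * W x y) :
    ∑ x, ∑ y, p x * W x y * logb b (W x y / pY y) =
      (∑ y, ((∑ x, p x * W x y * log (W x y)) - pY y * log (pY y))) / log b := by
  rw [Finset.sum_comm, Finset.sum_div]
  refine Finset.sum_congr rfl fun y _ => ?_
  have hterm : ∀ x, p x * W x y * logb b (W x y / pY y) =
      (p x * W x y * log (W x y) - p x * W x y * log (pY y)) / log b := fun x => by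
    rw [logb, log_div (hW x y) (hpY0 y)]
    ring
  rw [Finset.sum_congr rfl fun x _ => hterm x, ← Finset.sum_div, Finset.sum_sub_distrib,
    ← Finset.sum_mul, ← hpY]

theorem stmt_7_general (K : ℕ)
    (p : Fin K → ℝ) (hp : ∀ x, 0 < p x) (hpsum : ∑ x, p x = 1)
    (W : Fin K → Fin K → ℝ) (hW : ∀ x y, 0 < W x y) (hWsum : ∀ x, ∑ y, W x y = 1)
    (M : ℝ) (hM : 0 < M)
    (pY : Fin K → ℝ) (hpY : ∀ y, pY y = ∑ x, p x * W x y) :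
    Filter.Tendsto (fun α : ℝ => (1/(α-1)) *
        Real.logb 2 (M ^ (α-1) * ∑ y, (∑ x, p x * (W x y) ^ (1/(2-α))) ^ (2-α)))
      (nhdsWithin 1 {(1:ℝ)}ᶜ)
      (nhds (Real.logb 2 M + ∑ x, ∑ y, p x * W x y * Real.logb 2 (W x y / pY y))) := by
  have hpY_pos : ∀ y, 0 < pY y := fun y => hpY y ▸
    Finset.sum_pos (fun x _ => mul_pos (hp x) (hW x y)) ⟨y, Finset.mem_univ y⟩
  have hinner_one : ∀ y, ∑ x, p x * W x y ^ (1 / (2 - (1 : ℝ))) = pY y := fun y => by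
    norm_num [hpY]
  have hS1 : ∑ y, (∑ x, p x * W x y ^ (1 / (2 - (1 : ℝ)))) ^ (2 - (1 : ℝ)) = 1 := by
    have hpY_sum : ∑ y, pY y = 1 := by
      simp only [hpY]
      rw [Finset.sum_comm]
      simp only [← Finset.mul_sum, hWsum, mul_one, hpsum]
    simp only [hinner_one]
    norm_num [hpY_sum]
  have hS : HasDerivAt (fun α : ℝ => ∑ y, (∑ x, p x * W x y ^ (1 / (2 - α))) ^ (2 - α))
      (∑ y, ((∑ x, p x * W x y * log (W x y)) - pY y * log (pY y))) 1 := by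
    refine HasDerivAt.fun_sum fun y _ => ?_
    have hinner := HasDerivAt.fun_sum fun x (_ : x ∈ Finset.univ) =>
      (hasDerivAt_rpow_one_div_two_sub (hW x y)).const_mul (p x)
    simpa only [hinner_one, mul_assoc] using hinner.rpow_two_sub ((hinner_one y).symm ▸ hpY_pos y)
  rw [sum_mul_logb_div_marginal 2 p W (fun x y => (hW x y).ne') pY (fun y => (hpY_pos y).ne') hpY]
  exact tendsto_logb_rpow_mul_div_sub_one 2 hM hS hS1

/-- As `α → 1`, the Hölder bound on the generalized capacity recovers
`log₂ M + I(X;Y)`. -/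
theorem stmt_7 (K : ℕ) (hK : 0 < K)
    (p : Fin K → ℝ) (hp : ∀ x, 0 < p x) (hpsum : ∑ x, p x = 1)
    (W : Fin K → Fin K → ℝ) (hW : ∀ x y, 0 < W x y) (hWsum : ∀ x, ∑ y, W x y = 1)
    (M : ℝ) (hM : 0 < M)
    (pY : Fin K → ℝ) (hpY : ∀ y, pY y = ∑ x, p x * W x y) :
    Filter.Tendsto (fun α : ℝ => (1/(α-1)) *
        Real.logb 2 (M ^ (α-1) * ∑ y, (∑ x, p x * (W x y) ^ (1/(2-α))) ^ (2-α)))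
      (nhdsWithin 1 {(1:ℝ)}ᶜ)
      (nhds (Real.logb 2 M + ∑ x, ∑ y, p x * W x y * Real.logb 2 (W x y / pY y))) :=
  stmt_7_general K p hp hpsum W hW hWsum M hM pY hpY
end

section
/- Let X be uniformly distributed on 𝒳={1,…,K} (p(x)=1/K), let ρ:𝒳×𝒳→[0,∞) be a symmetric distortion measure in the following sense: there exist K distinct values ρ_1,…,ρ_K such that for every x the map x̂↦ρ(x,x̂) is a bijection from 𝒳 onto {ρ_1,…,ρ_K}, and for every x̂ the map x↦ρ(x,x̂) is a bijection from 𝒳 onto {ρ_1,…,ρ_K}. Let Q:(0,∞)→ℝ be convex with lim_{t→0+} t·Q(1/t)=0. Then for every D ≥ 0, R^Q(D) := inf{ I^Q(X;X̂) : conditional pmfs p(x̂|x) with Σ_{x,x̂} (1/K)p(x̂|x)ρ(x,x̂) ≤ D } equals inf{ Σ_{k:p_k>0} p_k·Q(1/(K·p_k)) : (p_1,…,p_K) a probability vector with Σ_k p_k·ρ_k ≤ D }. -/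
/-!
Choose permutations `σ x` with `ρ x xh = ρv (σ x xh)`; the column condition makes every
`x ↦ σ x xh` a bijection. A probability vector `pv` then yields the channel `pv (σ x xh)`, whose
output is uniform and whose distortion and `I^Q` are those of `pv`. Conversely, a channel yields
the law of the index `σ X X̂`, with the same distortion and, by subadditivity of the perspective
`(p, q) ↦ p Q(q/p)`, an objective no larger than `I^Q`. Subadditivity follows from convexity of
`Q`, except for terms with `p = 0`, where it needs `Q` antitone; this is what
`t Q(1/t) → 0` provides.
-/

open Finset Filter Set Topology Function

theorem csInf_eq_of_subset_of_forall_exists_le {α : Type*} [ConditionallyCompleteLinearOrder α]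
    {s t : Set α} (hts : t ⊆ s) (hst : ∀ a ∈ s, ∃ b ∈ t, b ≤ a) : sInf s = sInf t := by
  by_cases ht : BddBelow t
  · obtain ⟨m, hm⟩ := ht
    have hs : BddBelow s :=
      ⟨m, fun a ha => (hst a ha).elim fun b ⟨hb, hba⟩ => (hm hb).trans hba⟩
    rcases t.eq_empty_or_nonempty with rfl | htne
    · rw [Set.eq_empty_of_forall_notMem (s := s) fun a ha => by simpa using hst a ha]
    refine le_antisymm (csInf_le_csInf hs htne hts) (le_csInf (htne.mono hts) fun a ha => ?_)
    obtain ⟨b, hb, hba⟩ := hst a ha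
    exact (csInf_le ⟨m, hm⟩ hb).trans hba
  · have hs : ¬BddBelow s := fun hs => ht (hs.mono hts)
    rw [ConditionallyCompleteLinearOrder.csInf_of_not_bddBelow s hs,
      ConditionallyCompleteLinearOrder.csInf_of_not_bddBelow t ht]

theorem ConvexOn.antitoneOn_Ioi {Q : ℝ → ℝ} (hQ : ConvexOn ℝ (Ioi 0) Q)
    (hQlim : Tendsto (fun t => t * Q (1 / t)) (𝓝[>] 0) (𝓝 0)) : AntitoneOn Q (Ioi 0) := by
  have hQs : Tendsto (fun s => Q s / s) atTop (𝓝 0) :=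
    (hQlim.comp tendsto_inv_atTop_nhdsGT_zero).congr fun s => by simp [div_eq_inv_mul]
  intro a ha b hb hab
  rcases hab.eq_or_lt with rfl | hab
  · rfl
  set c := (Q b - Q a) / (b - a)
  -- Every secant from `a` further right has slope `≥ c`, so `Q` grows at least like `c s`.
  have hgrowth : ∀ᶠ s in atTop, (Q a - c * a) / s + c ≤ Q s / s := by
    filter_upwards [eventually_gt_atTop b] with s hs
    have hs0 : 0 < s := lt_trans hb hs
    have hsa : 0 < s - a := by linarith
    have hc : c ≤ (Q s - Q a) / (s - a) :=
      hQ.secant_mono ha hb hs0 hab.ne' (by linarith) hs.le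
    rw [le_div_iff₀ hsa] at hc
    rw [div_add' _ _ _ hs0.ne', div_le_div_iff_of_pos_right hs0]
    linarith
  have hc : c ≤ 0 := by
    refine le_of_tendsto_of_tendsto ?_ hQs hgrowth
    simpa using (tendsto_const_nhds.div_atTop tendsto_id).add_const c
  have hdiff := mul_nonpos_of_nonpos_of_nonneg hc (sub_nonneg.2 hab.le)
  rw [div_mul_cancel₀ _ (sub_pos.2 hab).ne'] at hdiff
  linarith

/-- Extended by `0` for `p ≤ 0`, as the summands of `I^Q` with `p(v|u) = 0` are. -/
noncomputable def perspective (Q : ℝ → ℝ) (p q : ℝ) : ℝ :=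
  if 0 < p then p * Q (q / p) else 0

namespace perspective

variable {Q : ℝ → ℝ}

theorem of_pos {p : ℝ} (hp : 0 < p) (q : ℝ) : perspective Q p q = p * Q (q / p) := if_pos hp

theorem of_nonpos {p : ℝ} (hp : p ≤ 0) (q : ℝ) : perspective Q p q = 0 := if_neg hp.not_gt

theorem sum_eq_sum_filter {ι : Type*} (s : Finset ι) (p q : ι → ℝ) :
    ∑ i ∈ s, perspective Q (p i) (q i) = ∑ i ∈ s with 0 < p i, p i * Q (q i / p i) :=
  (sum_filter _ _).symm

theorem mul_mul {c : ℝ} (hc : 0 ≤ c) (p q : ℝ) :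
    perspective Q (c * p) (c * q) = c * perspective Q p q := by
  rcases hc.eq_or_lt with rfl | hc
  · simp [perspective]
  unfold perspective
  by_cases hp : 0 < p
  · rw [if_pos (mul_pos hc hp), if_pos hp, mul_div_mul_left _ _ hc.ne', mul_assoc]
  · rw [if_neg (by rwa [mul_pos_iff_of_pos_left hc]), if_neg hp, mul_zero]

theorem le_of_le (hanti : AntitoneOn Q (Ioi 0)) {p q q' : ℝ} (hq : 0 < p → 0 < q)
    (hqq' : q ≤ q') :
    perspective Q p q' ≤ perspective Q p q := by
  rcases le_or_gt p 0 with hp | hp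
  · rw [of_nonpos hp, of_nonpos hp]
  rw [of_pos hp, of_pos hp]
  have hq0 : 0 < q / p := div_pos (hq hp) hp
  exact mul_le_mul_of_nonneg_left
    (hanti hq0 (hq0.trans_le (by gcongr)) (by gcongr)) hp.le

def Admissible (x : ℝ × ℝ) : Prop := 0 ≤ x.1 ∧ 0 ≤ x.2 ∧ (0 < x.1 → 0 < x.2)

theorem Admissible.add {x y : ℝ × ℝ} (hx : Admissible x) (hy : Admissible y) :
    Admissible (x + y) := by
  obtain ⟨hx1, hx2, hx⟩ := hx
  obtain ⟨hy1, hy2, hy⟩ := hy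
  refine ⟨add_nonneg hx1 hy1, add_nonneg hx2 hy2, fun h => ?_⟩
  rcases hx1.eq_or_lt with h1 | h1
  · exact add_pos_of_nonneg_of_pos hx2 (hy (by simpa [← h1] using h))
  · exact add_pos_of_pos_of_nonneg (hx h1) hy2

theorem add_le (hQ : ConvexOn ℝ (Ioi 0) Q) (hanti : AntitoneOn Q (Ioi 0))
    {x y : ℝ × ℝ} (hx : Admissible x) (hy : Admissible y) :
    perspective Q (x + y).1 (x + y).2 ≤ perspective Q x.1 x.2 + perspective Q y.1 y.2 := by
  obtain ⟨p₁, q₁⟩ := x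
  obtain ⟨p₂, q₂⟩ := y
  obtain ⟨hp₁, hq₁, h₁⟩ := hx
  obtain ⟨hp₂, hq₂, h₂⟩ := hy
  simp only [Prod.mk_add_mk] at *
  rcases hp₁.eq_or_lt with hp₁ | hp₁
  · rw [← hp₁, zero_add, of_nonpos le_rfl, zero_add]
    exact le_of_le hanti h₂ (le_add_of_nonneg_left hq₁)
  rcases hp₂.eq_or_lt with hp₂ | hp₂
  · rw [← hp₂, add_zero, of_nonpos le_rfl, add_zero]
    exact le_of_le hanti h₁ (le_add_of_nonneg_right hq₂)
  have hp : 0 < p₁ + p₂ := add_pos hp₁ hp₂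
  rw [of_pos hp, of_pos hp₁, of_pos hp₂]
  have hconv := hQ.2 (mem_Ioi.2 (div_pos (h₁ hp₁) hp₁))
    (mem_Ioi.2 (div_pos (h₂ hp₂) hp₂)) (div_pos hp₁ hp).le (div_pos hp₂ hp).le
    (by rw [← add_div, div_self hp.ne'])
  have hmean : (p₁ / (p₁ + p₂)) • (q₁ / p₁) + (p₂ / (p₁ + p₂)) • (q₂ / p₂) =
      (q₁ + q₂) / (p₁ + p₂) := by
    simp only [smul_eq_mul]; field_simp
  rw [hmean, smul_eq_mul, smul_eq_mul] at hconv
  calc (p₁ + p₂) * Q ((q₁ + q₂) / (p₁ + p₂))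
      ≤ (p₁ + p₂) * (p₁ / (p₁ + p₂) * Q (q₁ / p₁) + p₂ / (p₁ + p₂) * Q (q₂ / p₂)) := by
        gcongr
    _ = p₁ * Q (q₁ / p₁) + p₂ * Q (q₂ / p₂) := by field_simp

theorem sum_le (hQ : ConvexOn ℝ (Ioi 0) Q) (hanti : AntitoneOn Q (Ioi 0))
    {ι : Type*} (s : Finset ι) (p q : ι → ℝ)
    (hp : ∀ i ∈ s, 0 ≤ p i) (hq : ∀ i ∈ s, 0 ≤ q i)
    (hpq : ∀ i ∈ s, 0 < p i → 0 < q i) :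
    perspective Q (∑ i ∈ s, p i) (∑ i ∈ s, q i) ≤ ∑ i ∈ s, perspective Q (p i) (q i) := by
  have := le_sum_of_subadditive_on_pred (fun x : ℝ × ℝ => perspective Q x.1 x.2) Admissible
    (by simp [perspective]) (fun x y hx hy => add_le hQ hanti hx hy) (fun x y => Admissible.add)
    (fun i => (p i, q i)) (fun i hi => ⟨hp i hi, hq i hi, hpq i hi⟩)
  simpa [Prod.fst_sum, Prod.snd_sum] using this

end perspective

theorem exists_perm_forall_eq_comp {α β : Type*} [Finite α] {ρ : α → α → β} {ρv : α → β}
    (hρv : Injective ρv) (hrow : ∀ x, ∃ e : Equiv.Perm α, ∀ xh, ρ x xh = ρv (e xh))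
    (hcol : ∀ xh, ∃ e : Equiv.Perm α, ∀ x, ρ x xh = ρv (e x)) :
    ∃ σ : α → Equiv.Perm α,
      (∀ x xh, ρ x xh = ρv (σ x xh)) ∧ ∀ xh, Bijective fun x => σ x xh := by
  choose σ hσ using hrow
  refine ⟨σ, hσ, fun xh => Finite.injective_iff_bijective.1 fun x y hxy => ?_⟩
  obtain ⟨e, he⟩ := hcol xh
  exact e.injective <| hρv <| by rw [← he, ← he, hσ, hσ, hxy]

theorem bijective_perm_inv_apply {α : Type*} [Finite α] {σ : α → Equiv.Perm α}
    (hσ : ∀ xh, Bijective fun x => σ x xh) (k : α) : Bijective fun x => (σ x)⁻¹ k := by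
  refine Finite.injective_iff_bijective.1 fun x y hxy => (hσ ((σ x)⁻¹ k)).1 ?_
  simp only at hxy ⊢
  nth_rw 2 [hxy]
  simp only [Equiv.Perm.coe_inv, Equiv.apply_symm_apply]

theorem sum_sum_perm_inv {α M : Type*} [Fintype α] [AddCommMonoid M] (σ : α → Equiv.Perm α)
    (f : α → α → M) : ∑ k, ∑ x, f x ((σ x)⁻¹ k) = ∑ x, ∑ xh, f x xh := by
  rw [sum_comm]
  exact sum_congr rfl fun x _ => Equiv.sum_comp (σ x)⁻¹ (f x)

section UniformSource

variable {K : ℕ} {σ : Fin K → Equiv.Perm (Fin K)} {pc : Fin K → Fin K → ℝ}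

theorem sum_one_div_mul (hK : 0 < K) (c : ℝ) : ∑ _x : Fin K, 1 / (K : ℝ) * c = c := by
  rw [sum_const, card_univ, Fintype.card_fin, nsmul_eq_mul, ← mul_assoc, mul_one_div_cancel]
  · rw [one_mul]
  · exact_mod_cast hK.ne'

noncomputable def outputMarginal (pc : Fin K → Fin K → ℝ) (xh : Fin K) : ℝ :=
  ∑ x, 1 / (K : ℝ) * pc x xh

theorem sum_outputMarginal (hK : 0 < K) (hpc : ∀ x, ∑ xh, pc x xh = 1) :
    ∑ xh, outputMarginal pc xh = 1 := by
  simp only [outputMarginal]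
  rw [sum_comm]
  simp only [← mul_sum, hpc, sum_one_div_mul hK]

theorem outputMarginal_nonneg (hpc : ∀ x xh, 0 ≤ pc x xh) (xh : Fin K) :
    0 ≤ outputMarginal pc xh :=
  sum_nonneg fun x _ => mul_nonneg (by positivity) (hpc x xh)

theorem mul_le_outputMarginal (hpc : ∀ x xh, 0 ≤ pc x xh) (x xh : Fin K) :
    1 / (K : ℝ) * pc x xh ≤ outputMarginal pc xh :=
  single_le_sum (f := fun x' => 1 / (K : ℝ) * pc x' xh)
    (fun x' _ => mul_nonneg (by positivity) (hpc x' xh)) (mem_univ x)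

/-- `I^Q(X; X̂)` for `X` uniform on `Fin K` and the channel `pc x xh = p(xh | x)`. -/
noncomputable def uniformInfoQ (Q : ℝ → ℝ) (pc : Fin K → Fin K → ℝ) : ℝ :=
  ∑ x, 1 / (K : ℝ) * ∑ xh, perspective Q (pc x xh) (outputMarginal pc xh)

theorem sum_sum_filter_eq_uniformInfoQ (Q : ℝ → ℝ) (pc : Fin K → Fin K → ℝ) :
    ∑ x, ∑ xh ∈ univ with 0 < pc x xh,
        1 / (K : ℝ) * pc x xh * Q ((∑ x', 1 / (K : ℝ) * pc x' xh) / pc x xh) =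
      uniformInfoQ Q pc := by
  simp only [uniformInfoQ, perspective.sum_eq_sum_filter, mul_sum, mul_assoc, outputMarginal]

theorem uniformInfoQ_comp_perm (hK : 0 < K) (Q : ℝ → ℝ)
    (hσ : ∀ xh, Bijective fun x => σ x xh) {pv : Fin K → ℝ} (hpv : ∑ k, pv k = 1) :
    uniformInfoQ Q (fun x xh => pv (σ x xh)) = ∑ k, perspective Q (pv k) (1 / K) := by
  have hmarg : ∀ xh, outputMarginal (fun x xh => pv (σ x xh)) xh = 1 / K := fun xh => by
    rw [outputMarginal, ← mul_sum, (hσ xh).sum_comp pv, hpv, mul_one]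
  simp only [uniformInfoQ, hmarg, Equiv.sum_comp (σ _) fun k => perspective Q (pv k) (1 / K),
    sum_one_div_mul hK]

theorem sum_sum_comp_perm_mul_eq (hK : 0 < K) {ρ : Fin K → Fin K → ℝ} {ρv : Fin K → ℝ}
    (hρσ : ∀ x xh, ρ x xh = ρv (σ x xh)) (pv : Fin K → ℝ) :
    ∑ x, ∑ xh, 1 / (K : ℝ) * pv (σ x xh) * ρ x xh = ∑ k, pv k * ρv k := by
  simp only [hρσ, mul_assoc, ← mul_sum, Equiv.sum_comp (σ _) fun k => pv k * ρv k,
    sum_one_div_mul hK]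

/-- The law of the index `k = σ X X̂` of the distortion value `ρ X X̂ = ρv k`. -/
noncomputable def indexLaw (σ : Fin K → Equiv.Perm (Fin K)) (pc : Fin K → Fin K → ℝ)
    (k : Fin K) : ℝ :=
  ∑ x, 1 / (K : ℝ) * pc x ((σ x)⁻¹ k)

theorem indexLaw_nonneg (hpc : ∀ x xh, 0 ≤ pc x xh) (k : Fin K) : 0 ≤ indexLaw σ pc k :=
  sum_nonneg fun x _ => mul_nonneg (by positivity) (hpc _ _)

theorem sum_indexLaw (hK : 0 < K) (hpc : ∀ x, ∑ xh, pc x xh = 1) :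
    ∑ k, indexLaw σ pc k = 1 := by
  refine (sum_sum_perm_inv σ fun x xh => 1 / (K : ℝ) * pc x xh).trans ?_
  simp only [← mul_sum, hpc, sum_one_div_mul hK]

theorem sum_indexLaw_mul_eq {ρ : Fin K → Fin K → ℝ} {ρv : Fin K → ℝ}
    (hρσ : ∀ x xh, ρ x xh = ρv (σ x xh)) :
    ∑ k, indexLaw σ pc k * ρv k = ∑ x, ∑ xh, 1 / (K : ℝ) * pc x xh * ρ x xh := by
  rw [← sum_sum_perm_inv σ]
  simp only [indexLaw, sum_mul, hρσ, Equiv.Perm.coe_inv, Equiv.apply_symm_apply]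

theorem sum_perspective_indexLaw_le {Q : ℝ → ℝ} (hQ : ConvexOn ℝ (Ioi 0) Q)
    (hanti : AntitoneOn Q (Ioi 0)) (hK : 0 < K) (hσ : ∀ xh, Bijective fun x => σ x xh)
    (hpc0 : ∀ x xh, 0 ≤ pc x xh) (hpc1 : ∀ x, ∑ xh, pc x xh = 1) :
    ∑ k, perspective Q (indexLaw σ pc k) (1 / K) ≤ uniformInfoQ Q pc := by
  have hK' : (0 : ℝ) < 1 / K := by positivity
  have hmarg (k : Fin K) : ∑ x, 1 / (K : ℝ) * outputMarginal pc ((σ x)⁻¹ k) = 1 / K := by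
    rw [← mul_sum, (bijective_perm_inv_apply hσ k).sum_comp (outputMarginal pc),
      sum_outputMarginal hK hpc1, mul_one]
  calc ∑ k, perspective Q (indexLaw σ pc k) (1 / K)
      ≤ ∑ k, ∑ x, 1 / (K : ℝ) *
          perspective Q (pc x ((σ x)⁻¹ k)) (outputMarginal pc ((σ x)⁻¹ k)) := by
        refine sum_le_sum fun k _ => ?_
        calc perspective Q (indexLaw σ pc k) (1 / K)
            = perspective Q (∑ x, 1 / (K : ℝ) * pc x ((σ x)⁻¹ k))
                (∑ x, 1 / (K : ℝ) * outputMarginal pc ((σ x)⁻¹ k)) := by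
              rw [hmarg, indexLaw]
          _ ≤ ∑ x, perspective Q (1 / (K : ℝ) * pc x ((σ x)⁻¹ k))
                (1 / (K : ℝ) * outputMarginal pc ((σ x)⁻¹ k)) :=
            perspective.sum_le hQ hanti _ _ _ (fun x _ => mul_nonneg hK'.le (hpc0 _ _))
              (fun x _ => mul_nonneg hK'.le (outputMarginal_nonneg hpc0 _))
              fun x _ hx => mul_pos hK' (hx.trans_le (mul_le_outputMarginal hpc0 _ _))
          _ = _ := by simp only [perspective.mul_mul hK'.le]
    _ = uniformInfoQ Q pc := by
        rw [sum_sum_perm_inv σ fun x xh =>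
          1 / (K : ℝ) * perspective Q (pc x xh) (outputMarginal pc xh), uniformInfoQ]
        simp only [mul_sum]

end UniformSource

theorem stmt_8_general (K : ℕ) (hK : 0 < K)
    (ρ : Fin K → Fin K → ℝ)
    (ρv : Fin K → ℝ) (hρv : Function.Injective ρv)
    (hrow : ∀ x, ∃ e : Equiv.Perm (Fin K), ∀ xh, ρ x xh = ρv (e xh))
    (hcol : ∀ xh, ∃ e : Equiv.Perm (Fin K), ∀ x, ρ x xh = ρv (e x))
    (Q : ℝ → ℝ) (hQ : ConvexOn ℝ (Set.Ioi (0:ℝ)) Q)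
    (hQlim : Filter.Tendsto (fun t : ℝ => t * Q (1 / t))
      (nhdsWithin 0 (Set.Ioi 0)) (nhds 0))
    (D : ℝ) :
    sInf { r : ℝ | ∃ pc : Fin K → Fin K → ℝ,
        (∀ x xh, 0 ≤ pc x xh) ∧ (∀ x, ∑ xh, pc x xh = 1) ∧
        (∑ x, ∑ xh, (1/(K:ℝ)) * pc x xh * ρ x xh ≤ D) ∧
        r = ∑ x, ∑ xh ∈ Finset.univ.filter (fun xh => 0 < pc x xh),
            (1/(K:ℝ)) * pc x xh * Q ((∑ x', (1/(K:ℝ)) * pc x' xh) / pc x xh) }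
      = sInf { r : ℝ | ∃ pv : Fin K → ℝ,
          (∀ k, 0 ≤ pv k) ∧ (∑ k, pv k = 1) ∧ (∑ k, pv k * ρv k ≤ D) ∧
          r = ∑ k ∈ Finset.univ.filter (fun k => 0 < pv k),
              pv k * Q (1/((K:ℝ) * pv k)) } := by
  obtain ⟨σ, hρσ, hσ⟩ := exists_perm_forall_eq_comp hρv hrow hcol
  have hvector (pv : Fin K → ℝ) :
      ∑ k ∈ univ with 0 < pv k, pv k * Q (1 / ((K : ℝ) * pv k)) =
        ∑ k, perspective Q (pv k) (1 / K) := by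
    simp only [perspective.sum_eq_sum_filter, div_div]
  simp only [sum_sum_filter_eq_uniformInfoQ, hvector]
  refine csInf_eq_of_subset_of_forall_exists_le ?_ ?_
  · rintro _ ⟨pv, hpv0, hpv1, hpvD, rfl⟩
    exact ⟨fun x xh => pv (σ x xh), fun x xh => hpv0 _,
      fun x => (Equiv.sum_comp (σ x) pv).trans hpv1,
      (sum_sum_comp_perm_mul_eq hK hρσ pv).trans_le hpvD,
      (uniformInfoQ_comp_perm hK Q hσ hpv1).symm⟩
  · rintro _ ⟨pc, hpc0, hpc1, hpcD, rfl⟩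
    exact ⟨_, ⟨indexLaw σ pc, indexLaw_nonneg hpc0, sum_indexLaw hK hpc1,
      (sum_indexLaw_mul_eq hρσ).trans_le hpcD, rfl⟩,
      sum_perspective_indexLaw_le hQ (hQ.antitoneOn_Ioi hQlim) hK hσ hpc0 hpc1⟩

/-- For a uniform source and a symmetric distortion measure with distinct row values,
the generalized rate–distortion function reduces to an optimization over
probability vectors `(p_1, …, p_K)`. -/
theorem stmt_8 (K : ℕ) (hK : 0 < K)
    (ρ : Fin K → Fin K → ℝ) (hρ : ∀ x xh, 0 ≤ ρ x xh)
    (ρv : Fin K → ℝ) (hρv : Function.Injective ρv)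
    (hrow : ∀ x, ∃ e : Equiv.Perm (Fin K), ∀ xh, ρ x xh = ρv (e xh))
    (hcol : ∀ xh, ∃ e : Equiv.Perm (Fin K), ∀ x, ρ x xh = ρv (e x))
    (Q : ℝ → ℝ) (hQ : ConvexOn ℝ (Set.Ioi (0:ℝ)) Q)
    (hQlim : Filter.Tendsto (fun t : ℝ => t * Q (1 / t))
      (nhdsWithin 0 (Set.Ioi 0)) (nhds 0))
    (D : ℝ) (hD : 0 ≤ D) :
    sInf { r : ℝ | ∃ pc : Fin K → Fin K → ℝ,
        (∀ x xh, 0 ≤ pc x xh) ∧ (∀ x, ∑ xh, pc x xh = 1) ∧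
        (∑ x, ∑ xh, (1/(K:ℝ)) * pc x xh * ρ x xh ≤ D) ∧
        r = ∑ x, ∑ xh ∈ Finset.univ.filter (fun xh => 0 < pc x xh),
            (1/(K:ℝ)) * pc x xh * Q ((∑ x', (1/(K:ℝ)) * pc x' xh) / pc x xh) }
      = sInf { r : ℝ | ∃ pv : Fin K → ℝ,
          (∀ k, 0 ≤ pv k) ∧ (∑ k, pv k = 1) ∧ (∑ k, pv k * ρv k ≤ D) ∧
          r = ∑ k ∈ Finset.univ.filter (fun k => 0 < pv k),
              pv k * Q (1/((K:ℝ) * pv k)) } :=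
  stmt_8_general K hK ρ ρv hρv hrow hcol Q hQ hQlim D
end

section
/- Let X be uniformly distributed on 𝒳={1,…,K}, let ρ be a symmetric distortion measure with distinct row values ρ_1,…,ρ_K (for every x, x̂↦ρ(x,x̂) is a bijection onto {ρ_1,…,ρ_K}, and for every x̂, x↦ρ(x,x̂) is a bijection onto {ρ_1,…,ρ_K}), and let (p_1,…,p_K) be any probability vector. Define the channel p(x̂|x)=p_k whenever ρ(x,x̂)=ρ_k. Then: (i) the output distribution is uniform, p(x̂)=1/K for all x̂; (ii) for every convex Q:(0,∞)→ℝ, I^Q(X;X̂) = Σ_{k:p_k>0} p_k·Q(1/(K·p_k)); and (iii) the expected distortion Σ_{x,x̂}(1/K)p(x̂|x)ρ(x,x̂) equals Σ_k p_k·ρ_k. -/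
/-- For a uniform source, a symmetric distortion measure, and the channel
`p(xh|x) = p_k` whenever `ρ(x,xh) = ρ_k`: (i) the output distribution is uniform,
(ii) `I^Q(X;X̂) = Σ_{k : p_k > 0} p_k Q(1/(K p_k))` for every convex `Q`, and
(iii) the expected distortion equals `Σ_k p_k ρ_k`. -/
theorem stmt_10 (K : ℕ) (hK : 0 < K)
    (ρ : Fin K → Fin K → ℝ) (hρ : ∀ x xh, 0 ≤ ρ x xh)
    (ρv : Fin K → ℝ) (hρv : Function.Injective ρv)
    (hrow : ∀ x, ∃ e : Equiv.Perm (Fin K), ∀ xh, ρ x xh = ρv (e xh))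
    (hcol : ∀ xh, ∃ e : Equiv.Perm (Fin K), ∀ x, ρ x xh = ρv (e x))
    (pv : Fin K → ℝ) (hpv0 : ∀ k, 0 ≤ pv k) (hpv1 : ∑ k, pv k = 1)
    (pc : Fin K → Fin K → ℝ)
    (hpc : ∀ x xh k, ρ x xh = ρv k → pc x xh = pv k)
    (Q : ℝ → ℝ) (hQ : ConvexOn ℝ (Set.Ioi (0:ℝ)) Q) :
    (∀ xh, (∑ x, (1/(K:ℝ)) * pc x xh) = 1/(K:ℝ))
    ∧ (∑ x, ∑ xh ∈ Finset.univ.filter (fun xh => 0 < pc x xh),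
          (1/(K:ℝ)) * pc x xh * Q ((∑ x', (1/(K:ℝ)) * pc x' xh) / pc x xh))
        = ∑ k ∈ Finset.univ.filter (fun k => 0 < pv k), pv k * Q (1/((K:ℝ) * pv k))
    ∧ (∑ x, ∑ xh, (1/(K:ℝ)) * pc x xh * ρ x xh) = ∑ k, pv k * ρv k := by
  have hK' : (K:ℝ) ≠ 0 := Nat.cast_ne_zero.mpr hK.ne'
  have hout : ∀ xh, (∑ x, (1/(K:ℝ)) * pc x xh) = 1/(K:ℝ) := by
    intro xh
    obtain ⟨e, he⟩ := hcol xh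
    have hpc' : ∀ x, pc x xh = pv (e x) := fun x => hpc x xh (e x) (he x)
    calc ∑ x, (1/(K:ℝ)) * pc x xh = ∑ x, (1/(K:ℝ)) * pv (e x) := by
          simp_rw [hpc']
      _ = (1/(K:ℝ)) * ∑ x, pv (e x) := by rw [← Finset.mul_sum]
      _ = 1/(K:ℝ) := by rw [Equiv.sum_comp e pv, hpv1, mul_one]
  refine ⟨hout, ?_, ?_⟩
  · have key : ∀ x : Fin K, (∑ xh ∈ Finset.univ.filter (fun xh => 0 < pc x xh),
        (1/(K:ℝ)) * pc x xh * Q ((∑ x', (1/(K:ℝ)) * pc x' xh) / pc x xh))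
        = (1/(K:ℝ)) * ∑ k ∈ Finset.univ.filter (fun k => 0 < pv k),
            pv k * Q (1/((K:ℝ) * pv k)) := by
      intro x
      obtain ⟨e, he⟩ := hrow x
      have hpc' : ∀ xh, pc x xh = pv (e xh) := fun xh => hpc x xh (e xh) (he xh)
      have h1 : (∑ xh ∈ Finset.univ.filter (fun xh => 0 < pc x xh),
          (1/(K:ℝ)) * pc x xh * Q ((∑ x', (1/(K:ℝ)) * pc x' xh) / pc x xh))
          = ∑ xh, (1/(K:ℝ)) * pc x xh * Q ((1/(K:ℝ)) / pc x xh) := by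
        rw [Finset.sum_filter]
        refine Finset.sum_congr rfl (fun xh _ => ?_)
        rw [hout xh]
        by_cases h : 0 < pc x xh
        · simp [h]
        · have : pc x xh = 0 := le_antisymm (not_lt.mp h) (by rw [hpc']; exact hpv0 _)
          simp [h, this]
      have h2 : (∑ k ∈ Finset.univ.filter (fun k => 0 < pv k),
          pv k * Q (1/((K:ℝ) * pv k)))
          = ∑ k, pv k * Q ((1/(K:ℝ)) / pv k) := by
        rw [Finset.sum_filter]
        refine Finset.sum_congr rfl (fun k _ => ?_)
        by_cases h : 0 < pv k
        · rw [if_pos h, div_div]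
        · have : pv k = 0 := le_antisymm (not_lt.mp h) (hpv0 k)
          simp [h, this]
      rw [h1, h2, Finset.mul_sum]
      simp_rw [hpc', mul_assoc]
      exact Equiv.sum_comp e (fun k => (1/(K:ℝ)) * (pv k * Q ((1/(K:ℝ)) / pv k)))
    simp_rw [key]
    rw [Finset.sum_const, Finset.card_univ, Fintype.card_fin, nsmul_eq_mul,
      ← mul_assoc, mul_one_div, div_self hK', one_mul]
  · have key : ∀ x : Fin K, (∑ xh, (1/(K:ℝ)) * pc x xh * ρ x xh)
        = (1/(K:ℝ)) * ∑ k, pv k * ρv k := by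
      intro x
      obtain ⟨e, he⟩ := hrow x
      have hpc' : ∀ xh, pc x xh = pv (e xh) := fun xh => hpc x xh (e xh) (he xh)
      rw [Finset.mul_sum]
      simp_rw [hpc', he, mul_assoc]
      exact Equiv.sum_comp e (fun k => (1/(K:ℝ)) * (pv k * ρv k))
    simp_rw [key]
    rw [Finset.sum_const, Finset.card_univ, Fintype.card_fin, nsmul_eq_mul,
      ← mul_assoc, mul_one_div, div_self hK', one_mul]
end

section
/- Let X be uniformly distributed on 𝒳={1,…,K}, let the side-information channel be p(y|x)=μ if y=x and p(y|x)=ε if y≠x, where μ,ε∈[0,1], μ>ε, and μ+(K−1)ε=1, and let ρ be the Hamming distortion. Then for every surjective encoder f:𝒳→{1,…,M} (M≤K), the minimum over all decoders g:{1,…,M}×𝒳→𝒳 of the distortion Σ_{x,y} (1/K)·p(y|x)·1{g(f(x),y)≠x} equals ε·(K−M). In particular, the minimal achievable distortion of a fixed-rate scalar source code of rate log₂ M in this Wyner–Ziv setting is ε(K−M). -/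
/-- For the uniform source and the symmetric channel `p(y|x) = μ` if `y = x`,
`ε` otherwise, the minimal distortion over all decoders of a fixed-rate scalar
code with surjective encoder `f : 𝒳 → {1,…,M}` equals `ε(K - M)`. -/
theorem stmt_13 (K M : ℕ) (hM : 0 < M) (hMK : M ≤ K)
    (μ ε : ℝ) (hμ0 : 0 ≤ μ) (hμ1 : μ ≤ 1) (hε0 : 0 ≤ ε) (hε1 : ε ≤ 1)
    (hεμ : ε < μ) (hsum : μ + ((K:ℝ) - 1) * ε = 1)
    (f : Fin K → Fin M) (hf : Function.Surjective f) :
    sInf { d : ℝ | ∃ g : Fin M → Fin K → Fin K,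
        d = ∑ x, ∑ y, (1/(K:ℝ)) * (if y = x then μ else ε) *
              (if g (f x) y ≠ x then 1 else 0) }
      = ε * ((K:ℝ) - (M:ℝ)) := by
  classical
  have hK : 0 < K := lt_of_lt_of_le hM hMK
  have hKR : (0:ℝ) < K := by exact_mod_cast hK
  -- row sums of the channel
  have hrow : ∀ x : Fin K, ∑ y : Fin K, (if y = x then μ else ε) = 1 := by
    intro x
    have h1 : ∀ y : Fin K, (if y = x then μ else ε)
        = ε + (if y = x then μ - ε else 0) := by
      intro y; split <;> ring
    simp_rw [h1, Finset.sum_add_distrib, Finset.sum_ite_eq' Finset.univ x]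
    simp only [Finset.mem_univ, if_true, Finset.sum_const, Finset.card_univ,
      Fintype.card_fin, nsmul_eq_mul]
    linarith [hsum]
  -- rearranged formula for the distortion of any decoder
  have key : ∀ g : Fin M → Fin K → Fin K,
      (∑ x, ∑ y, (1/(K:ℝ)) * (if y = x then μ else ε) *
        (if g (f x) y ≠ x then 1 else 0))
      = 1 - (1/(K:ℝ)) * ∑ y : Fin K, ∑ z : Fin M,
          (if f (g z y) = z then (if y = g z y then μ else ε) else 0) := by
    intro g
    have h1 : ∀ x y : Fin K,
        (1/(K:ℝ)) * (if y = x then μ else ε) * (if g (f x) y ≠ x then 1 else 0)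
        = (1/(K:ℝ)) * (if y = x then μ else ε)
          - (1/(K:ℝ)) * (if g (f x) y = x then (if y = x then μ else ε) else 0) := by
      intro x y
      by_cases h : g (f x) y = x <;> simp [h]
    simp_rw [h1, Finset.sum_sub_distrib, ← Finset.mul_sum, hrow]
    have hfirst : (1/(K:ℝ)) * ∑ _x : Fin K, (1:ℝ) = 1 := by
      simp only [Finset.sum_const, Finset.card_univ, Fintype.card_fin, nsmul_eq_mul,
        mul_one]
      field_simp
    rw [hfirst]
    congr 1
    rw [Finset.sum_comm]
    congr 1
    refine Finset.sum_congr rfl (fun y _ => ?_)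
    -- fiberwise decomposition over the encoder cells
    rw [← Finset.sum_fiberwise Finset.univ f
      (fun x => if g (f x) y = x then (if y = x then μ else ε) else 0)]
    refine Finset.sum_congr rfl (fun z _ => ?_)
    have h2 : ∀ x ∈ Finset.univ.filter (fun x => f x = z),
        (if g (f x) y = x then (if y = x then μ else ε) else 0)
        = (if g z y = x then (if y = x then μ else ε) else 0) := by
      intro x hx
      rw [Finset.mem_filter] at hx
      rw [hx.2]
    rw [Finset.sum_congr rfl h2, Finset.sum_ite_eq]
    simp only [Finset.mem_filter, Finset.mem_univ, true_and]
  -- pointwise bound for the inner term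
  have term_le : ∀ (g : Fin M → Fin K → Fin K) (y : Fin K) (z : Fin M),
      (if f (g z y) = z then (if y = g z y then μ else ε) else 0)
        ≤ ε + (μ - ε) * (if z = f y then 1 else 0) := by
    intro g y z
    by_cases h : f (g z y) = z
    · by_cases h2 : y = g z y
      · have hz : z = f y := by rw [h2]; exact h.symm
        rw [if_pos h, if_pos h2, if_pos hz]
        linarith
      · rw [if_pos h, if_neg h2]
        split_ifs <;> nlinarith
    · rw [if_neg h]
      split_ifs <;> nlinarith
  -- the optimal decoder achieves the bound with equality
  set g0 : Fin M → Fin K → Fin K :=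
    fun z y => if f y = z then y else Function.surjInv hf z with hg0
  have term_eq : ∀ (y : Fin K) (z : Fin M),
      (if f (g0 z y) = z then (if y = g0 z y then μ else ε) else 0)
        = ε + (μ - ε) * (if z = f y then 1 else 0) := by
    intro y z
    by_cases h : f y = z
    · have hgy : g0 z y = y := if_pos h
      rw [hgy, if_pos h, if_pos rfl, if_pos h.symm]
      ring
    · have hinv : f (Function.surjInv hf z) = z := Function.surjInv_eq hf z
      have hne : y ≠ Function.surjInv hf z := by
        intro heq; exact h (heq ▸ hinv)
      have hgy : g0 z y = Function.surjInv hf z := if_neg h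
      rw [hgy, if_pos hinv, if_neg hne, if_neg (Ne.symm h)]
      ring
  have inner_sum : ∀ y : Fin K,
      ∑ z : Fin M, (ε + (μ - ε) * (if z = f y then 1 else 0))
        = (M:ℝ) * ε + (μ - ε) := by
    intro y
    rw [Finset.sum_add_distrib]
    simp_rw [mul_ite, mul_one, mul_zero, Finset.sum_ite_eq' Finset.univ (f y)]
    simp [Finset.sum_const, Finset.card_univ, mul_comm]
  have hval : (1:ℝ) - (1/(K:ℝ)) * ((K:ℝ) * ((M:ℝ) * ε + (μ - ε)))
      = ε * ((K:ℝ) - (M:ℝ)) := by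
    rw [← mul_assoc]
    rw [one_div, inv_mul_cancel₀ (ne_of_gt hKR), one_mul]
    nlinarith [hsum]
  -- value of the optimal decoder
  have hopt : (∑ x, ∑ y, (1/(K:ℝ)) * (if y = x then μ else ε) *
        (if g0 (f x) y ≠ x then 1 else 0)) = ε * ((K:ℝ) - (M:ℝ)) := by
    rw [key g0]
    simp_rw [term_eq, inner_sum]
    rw [Finset.sum_const, Finset.card_univ, Fintype.card_fin, nsmul_eq_mul]
    exact hval
  -- lower bound for every decoder
  have hlb : ∀ d ∈ { d : ℝ | ∃ g : Fin M → Fin K → Fin K,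
      d = ∑ x, ∑ y, (1/(K:ℝ)) * (if y = x then μ else ε) *
            (if g (f x) y ≠ x then 1 else 0) }, ε * ((K:ℝ) - (M:ℝ)) ≤ d := by
    rintro d ⟨g, rfl⟩
    rw [key g]
    have hsle : ∑ y : Fin K, ∑ z : Fin M,
        (if f (g z y) = z then (if y = g z y then μ else ε) else 0)
        ≤ (K:ℝ) * ((M:ℝ) * ε + (μ - ε)) := by
      calc ∑ y : Fin K, ∑ z : Fin M,
            (if f (g z y) = z then (if y = g z y then μ else ε) else 0)
          ≤ ∑ y : Fin K, ((M:ℝ) * ε + (μ - ε)) := by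
            refine Finset.sum_le_sum (fun y _ => ?_)
            rw [← inner_sum y]
            exact Finset.sum_le_sum (fun z _ => term_le g y z)
        _ = (K:ℝ) * ((M:ℝ) * ε + (μ - ε)) := by
            rw [Finset.sum_const, Finset.card_univ, Fintype.card_fin, nsmul_eq_mul]
    have h0 : (0:ℝ) ≤ 1/(K:ℝ) := by positivity
    nlinarith [mul_le_mul_of_nonneg_left hsle h0]
  apply le_antisymm
  · exact csInf_le ⟨ε * ((K:ℝ) - (M:ℝ)), hlb⟩ ⟨g0, hopt.symm⟩
  · exact le_csInf ⟨_, g0, hopt.symm⟩ hlb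
end

section
/- Let K ≥ 1 and c ≥ 1 be reals and let 1 < α < 2. Then the function q(x) = x·(x + c^α − 1)·(x + c − 1)^{1−α} + (K − x)·x^{2−α} is strictly concave on the interval [1, K]; in particular its second derivative satisfies q''(x) < 0 for all x∈[1,K]. -/
/-!
Write `v = x + c - 1 ≥ x`. After clearing the powers `v^{1-α}, v^{-α}, x^{1-α}` down to
`v^{-1-α}` and `x^{-α}`, the second derivative splits as
`(3-α)(2-α)(v^{1-α} - x^{1-α}) + (2-α)(1-α)((c^α - 2c + 1) v^{-α} + K x^{-α})
  - α(α-1)(c-1)(c^α - c) v^{-1-α}`.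
The first and last terms are `≤ 0` because `v ≥ x`, `1 - α < 0` and `c^α ≥ c`; the middle one is
`< 0` because `K x^{-α} ≥ x^{1-α} ≥ v^{1-α}` makes the bracket at least `(c^α - c + x) v^{-α} > 0`.
-/

open Real Set

noncomputable section

namespace SymmetricChannel

variable (K c α : ℝ)

def q (x : ℝ) : ℝ :=
  x * (x + c ^ α - 1) * (x + c - 1) ^ (1 - α) + (K - x) * x ^ (2 - α)

def q' (x : ℝ) : ℝ :=
  (2 * x + c ^ α - 1) * (x + c - 1) ^ (1 - α)
    + (1 - α) * (x * (x + c ^ α - 1)) * (x + c - 1) ^ (-α)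
    - x ^ (2 - α) + (2 - α) * (K - x) * x ^ (1 - α)

def q'' (x : ℝ) : ℝ :=
  2 * (x + c - 1) ^ (1 - α) + 2 * (1 - α) * (2 * x + c ^ α - 1) * (x + c - 1) ^ (-α)
    - α * (1 - α) * (x * (x + c ^ α - 1)) * (x + c - 1) ^ (-1 - α)
    - 2 * (2 - α) * x ^ (1 - α) + (2 - α) * (1 - α) * (K - x) * x ^ (-α)

variable {K c α}

theorem hasDerivAt_shifted_rpow {x : ℝ} (p : ℝ) (hv : x + c - 1 ≠ 0) :
    HasDerivAt (fun y ↦ (y + c - 1) ^ p) (p * (x + c - 1) ^ (p - 1)) x := by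
  have h := (((hasDerivAt_id x).add_const c).sub_const 1).rpow_const (p := p) (Or.inl hv)
  simpa only [id, one_mul] using h

theorem hasDerivAt_q {x : ℝ} (hx : x ≠ 0) (hv : x + c - 1 ≠ 0) :
    HasDerivAt (q K c α) (q' K c α x) x := by
  have hprod : HasDerivAt (fun y : ℝ ↦ y * (y + c ^ α - 1)) (1 * (x + c ^ α - 1) + x * 1) x :=
    (hasDerivAt_id x).mul (((hasDerivAt_id x).add_const _).sub_const 1)
  have h := (hprod.mul (hasDerivAt_shifted_rpow (1 - α) hv)).add
    (((hasDerivAt_id x).const_sub K).mul (hasDerivAt_rpow_const (p := 2 - α) (Or.inl hx)))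
  refine h.congr_deriv ?_
  rw [q', show (1 : ℝ) - α - 1 = -α by ring, show (2 : ℝ) - α - 1 = 1 - α by ring]
  simp only [id]
  ring

theorem hasDerivAt_q' {x : ℝ} (hx : x ≠ 0) (hv : x + c - 1 ≠ 0) :
    HasDerivAt (q' K c α) (q'' K c α x) x := by
  have hlin : HasDerivAt (fun y : ℝ ↦ 2 * y + c ^ α - 1) (2 * 1) x :=
    (((hasDerivAt_id x).const_mul 2).add_const _).sub_const 1
  have hprod : HasDerivAt (fun y : ℝ ↦ y * (y + c ^ α - 1)) (1 * (x + c ^ α - 1) + x * 1) x :=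
    (hasDerivAt_id x).mul (((hasDerivAt_id x).add_const _).sub_const 1)
  have h := (((hlin.mul (hasDerivAt_shifted_rpow (1 - α) hv)).add
    ((hprod.const_mul (1 - α)).mul (hasDerivAt_shifted_rpow (-α) hv))).sub
      (hasDerivAt_rpow_const (p := 2 - α) (Or.inl hx))).add
    ((((hasDerivAt_id x).const_sub K).const_mul (2 - α)).mul
      (hasDerivAt_rpow_const (p := 1 - α) (Or.inl hx)))
  refine h.congr_deriv ?_
  rw [q'', show (1 : ℝ) - α - 1 = -α by ring, show (2 : ℝ) - α - 1 = 1 - α by ring,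
    show -α - 1 = -1 - α by ring]
  simp only [id]
  ring

theorem q''_neg (hc : 1 ≤ c) (hα1 : 1 < α) (hα2 : α < 2) {x : ℝ} (hx : 1 ≤ x) (hxK : x ≤ K) :
    q'' K c α x < 0 := by
  have hx0 : 0 < x := by linarith
  set v := x + c - 1 with hv
  have hv0 : 0 < v := by linarith
  have hxv : x ≤ v := by linarith
  have e1 : v ^ (-α) = v * v ^ (-1 - α) := by
    rw [show -α = 1 + (-1 - α) by ring, rpow_add hv0, rpow_one]
  have e2 : v ^ (1 - α) = v * v ^ (-α) := by
    rw [show 1 - α = 1 + -α by ring, rpow_add hv0, rpow_one]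
  have e3 : x ^ (1 - α) = x * x ^ (-α) := by
    rw [show 1 - α = 1 + -α by ring, rpow_add hx0, rpow_one]
  have hcα : c ≤ c ^ α := by
    simpa only [rpow_one] using rpow_le_rpow_of_exponent_le hc hα1.le
  have hvx : v ^ (1 - α) ≤ x ^ (1 - α) := rpow_le_rpow_of_nonpos hx0 hxv (by linarith)
  have hsplit : q'' K c α x
      = (3 - α) * (2 - α) * (v ^ (1 - α) - x ^ (1 - α))
        + (2 - α) * (1 - α) * ((c ^ α - 2 * c + 1) * v ^ (-α) + K * x ^ (-α))
        - α * (α - 1) * ((c - 1) * (c ^ α - c)) * v ^ (-1 - α) := by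
    rw [q'', ← hv, e2, e1, e3, hv]
    ring
  have hfirst : (3 - α) * (2 - α) * (v ^ (1 - α) - x ^ (1 - α)) ≤ 0 :=
    mul_nonpos_of_nonneg_of_nonpos (by nlinarith) (by linarith)
  have hbracket : 0 < (c ^ α - 2 * c + 1) * v ^ (-α) + K * x ^ (-α) := by
    have hKx : v * v ^ (-α) ≤ K * x ^ (-α) :=
      calc v * v ^ (-α) = v ^ (1 - α) := e2.symm
        _ ≤ x ^ (1 - α) := hvx
        _ = x * x ^ (-α) := e3
        _ ≤ K * x ^ (-α) := mul_le_mul_of_nonneg_right hxK (rpow_pos_of_pos hx0 _).le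
    have hpos : 0 < (c ^ α - c + x) * v ^ (-α) :=
      mul_pos (by linarith) (rpow_pos_of_pos hv0 _)
    nlinarith
  have hmiddle : (2 - α) * (1 - α) * ((c ^ α - 2 * c + 1) * v ^ (-α) + K * x ^ (-α)) < 0 :=
    mul_neg_of_neg_of_pos (by nlinarith) hbracket
  have hlast : 0 ≤ α * (α - 1) * ((c - 1) * (c ^ α - c)) * v ^ (-1 - α) := by
    have := mul_nonneg (by linarith : (0 : ℝ) ≤ c - 1) (by linarith : 0 ≤ c ^ α - c)
    have := rpow_pos_of_pos hv0 (-1 - α)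
    positivity
  linarith

end SymmetricChannel

end

open SymmetricChannel in
theorem stmt_15_general (K c : ℝ) (hc : 1 ≤ c)
    (α : ℝ) (hα1 : 1 < α) (hα2 : α < 2) :
    StrictConcaveOn ℝ (Set.Icc (1:ℝ) K)
      (fun x : ℝ => x * (x + c ^ α - 1) * (x + c - 1) ^ (1 - α) + (K - x) * x ^ (2 - α))
    ∧ ∀ x ∈ Set.Icc (1:ℝ) K,
        deriv (deriv (fun x : ℝ =>
          x * (x + c ^ α - 1) * (x + c - 1) ^ (1 - α) + (K - x) * x ^ (2 - α))) x < 0 := by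
  change StrictConcaveOn ℝ _ (q K c α) ∧ ∀ x ∈ Icc 1 K, deriv (deriv (q K c α)) x < 0
  have hderiv : ∀ x, 0 < x → HasDerivAt (q K c α) (q' K c α x) x := fun x hx ↦
    hasDerivAt_q hx.ne' (by linarith)
  have hderiv2 : ∀ x ∈ Icc 1 K, deriv (deriv (q K c α)) x < 0 := by
    rintro x ⟨hx1, hxK⟩
    have hx0 : 0 < x := by linarith
    have hq' : deriv (q K c α) =ᶠ[nhds x] q' K c α := by
      filter_upwards [Ioi_mem_nhds hx0] with y hy using (hderiv y hy).deriv
    rw [hq'.deriv_eq, (hasDerivAt_q' hx0.ne' (by linarith)).deriv]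
    exact q''_neg hc hα1 hα2 hx1 hxK
  refine ⟨strictConcaveOn_of_deriv2_neg' (convex_Icc 1 K) ?_ hderiv2, hderiv2⟩
  exact fun x hx ↦ (hderiv x (by linarith [hx.1])).continuousAt.continuousWithinAt

/-- Strict concavity of `q(x) = x(x + c^α - 1)(x + c - 1)^{1-α} + (K - x)x^{2-α}`
on `[1, K]` for `1 < α < 2`, together with strict negativity of its second
derivative there. -/
theorem stmt_15 (K c : ℝ) (hK : 1 ≤ K) (hc : 1 ≤ c)
    (α : ℝ) (hα1 : 1 < α) (hα2 : α < 2) :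
    StrictConcaveOn ℝ (Set.Icc (1:ℝ) K)
      (fun x : ℝ => x * (x + c ^ α - 1) * (x + c - 1) ^ (1 - α) + (K - x) * x ^ (2 - α))
    ∧ ∀ x ∈ Set.Icc (1:ℝ) K,
        deriv (deriv (fun x : ℝ =>
          x * (x + c ^ α - 1) * (x + c - 1) ^ (1 - α) + (K - x) * x ^ (2 - α))) x < 0 :=
  stmt_15_general K c hc α hα1 hα2
end

section
/- Let X be uniformly distributed on 𝒳={1,…,K}, let p(y|x)=μ if y=x and ε otherwise with μ>ε>0 and μ+(K−1)ε=1, let 1<α<2, and let f:𝒳→{1,…,M} be any encoder with all M cells A_z=f⁻¹(z) nonempty. Then I^Q(X;(Y,Z)) = K^{α−2}·ε·Σ_{z=1}^M q(|A_z|) ≤ K^{α−1}·ε·[ ( K/M + (μ/ε)^α − 1 ) / ( K/M + μ/ε − 1 )^{α−1} + (M−1)·(K/M)^{2−α} ], where q(m)= m(m+(μ/ε)^α−1)(m+μ/ε−1)^{1−α} + (K−m)m^{2−α}, with equality whenever all cells have size K/M. -/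
/-!
Each summand `(1/K) w ((1/K) P / w)^{1-α}` equals `K^{α-2} w^α P^{1-α}`. For the symmetric
channel the column sum `P` over a cell `A` only depends on whether `y ∈ A`, so all `x` in a cell
of size `m` contribute equally and the cell contributes `ε q(m)`. With `r = μ/ε` and
`s = t + r - 1`, `q` is a combination of `s^{3-α}, s^{2-α}, s^{1-α}, t^{2-α}, t^{3-α}` whose second
derivative is nonpositive for `0 < t ≤ K`, the bound `t ≤ K` absorbing its one positive term. So
`q` is concave on `[0, K]`, and Jensen's inequality for the cell sizes, which sum to `K`, gives the
bound.
-/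

open Real Set Finset

theorem ConcaveOn.sum_le_card_mul_map_sum_div_card {ι : Type*} {s : Set ℝ} {g : ℝ → ℝ}
    (hg : ConcaveOn ℝ s g) {t : Finset ι} (ht : t.Nonempty) {p : ι → ℝ}
    (hp : ∀ i ∈ t, p i ∈ s) :
    ∑ i ∈ t, g (p i) ≤ #t * g ((∑ i ∈ t, p i) / #t) := by
  have hcard : (0 : ℝ) < #t := by exact_mod_cast ht.card_pos
  have h := hg.le_map_sum (w := fun _ => (#t : ℝ)⁻¹) (fun _ _ => by positivity)
    (by rw [sum_const, nsmul_eq_mul, mul_inv_cancel₀ hcard.ne']) hp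
  rwa [← smul_sum, ← smul_sum, smul_eq_mul, smul_eq_mul, inv_mul_eq_div, inv_mul_eq_div,
    div_le_iff₀' hcard] at h

-- Taking the new exponent `q` as an argument lets derivatives be chained with exponents already
-- in the normal form `2 - α`, `1 - α`, `-α`, ... instead of `3 - α - 1`.
lemma hasDerivAt_rpow_of_sub_one_eq {p q x : ℝ} (hx : 0 < x) (hq : p - 1 = q) :
    HasDerivAt (fun t : ℝ => t ^ p) (p * x ^ q) x :=
  hq ▸ hasDerivAt_rpow_const (Or.inl hx.ne')

section Concavity

variable {a b K α : ℝ}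

lemma shifted_rpow_combination_deriv2_nonpos (hb : 0 < b) (hba : b ≤ a) (hα1 : 1 ≤ α) (hα2 : α ≤ 2)
    {t : ℝ} (ht : 0 < t) (htK : t ≤ K) :
    (3 - α) * ((2 - α) * (t + b) ^ (1 - α)) + (a - 2 * b) * ((2 - α) * ((1 - α) * (t + b) ^ (-α)))
      - b * (a - b) * ((1 - α) * (-α * (t + b) ^ (-α - 1)))
      + (K * ((2 - α) * ((1 - α) * t ^ (-α))) - (3 - α) * ((2 - α) * t ^ (1 - α))) ≤ 0 := by
  have hs : 0 < t + b := by linarith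
  have hs_le_t : (t + b) ^ (1 - α) ≤ t ^ (1 - α) :=
    rpow_le_rpow_of_nonpos ht (by linarith) (by linarith)
  have hbs : b * (t + b) ^ (-α) ≤ (t + b) ^ (1 - α) := by
    rw [sub_eq_add_neg, rpow_add hs, rpow_one]
    exact mul_le_mul_of_nonneg_right (by linarith) (rpow_nonneg hs.le _)
  have htK' : t ^ (1 - α) ≤ K * t ^ (-α) := by
    rw [sub_eq_add_neg, rpow_add ht, rpow_one]
    exact mul_le_mul_of_nonneg_right htK (rpow_nonneg ht.le _)
  have hab : 0 ≤ a - b := by linarith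
  have hmid : 0 ≤ (a - b) * (t + b) ^ (-α) := mul_nonneg hab (rpow_nonneg hs.le _)
  have hlast : 0 ≤ b * (a - b) * (α * (t + b) ^ (-α - 1)) := by
    have := rpow_nonneg hs.le (-α - 1)
    positivity
  -- With `s = t + b`, these bounds reduce the `(2 - α)`-part to `2 (s^{1-α} - t^{1-α}) ≤ 0`.
  linear_combination (2 - α) * (α - 1) * (hmid + hbs + htK') + 2 * (2 - α) * hs_le_t
    + (α - 1) * hlast

lemma concaveOn_shifted_rpow_combination (hb : 0 < b) (hba : b ≤ a) (hα1 : 1 ≤ α) (hα2 : α ≤ 2) :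
    ConcaveOn ℝ (Icc 0 K) fun t => (t + b) ^ (3 - α) + (a - 2 * b) * (t + b) ^ (2 - α)
      - b * (a - b) * (t + b) ^ (1 - α) + (K * t ^ (2 - α) - t ^ (3 - α)) := by
  have hu : ∀ s : ℝ, 0 < s → HasDerivAt
      (fun s => s ^ (3 - α) + (a - 2 * b) * s ^ (2 - α) - b * (a - b) * s ^ (1 - α))
      ((3 - α) * s ^ (2 - α) + (a - 2 * b) * ((2 - α) * s ^ (1 - α))
        - b * (a - b) * ((1 - α) * s ^ (-α))) s := fun s hs => by
    refine (((hasDerivAt_rpow_of_sub_one_eq hs ?_).add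
      ((hasDerivAt_rpow_of_sub_one_eq hs ?_).const_mul _)).sub
      ((hasDerivAt_rpow_of_sub_one_eq hs ?_).const_mul _)) <;> ring
  have hu' : ∀ s : ℝ, 0 < s → HasDerivAt
      (fun s => (3 - α) * s ^ (2 - α) + (a - 2 * b) * ((2 - α) * s ^ (1 - α))
        - b * (a - b) * ((1 - α) * s ^ (-α)))
      ((3 - α) * ((2 - α) * s ^ (1 - α)) + (a - 2 * b) * ((2 - α) * ((1 - α) * s ^ (-α)))
        - b * (a - b) * ((1 - α) * (-α * s ^ (-α - 1)))) s := fun s hs => by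
    refine (((hasDerivAt_rpow_of_sub_one_eq hs ?_).const_mul _).add
      (((hasDerivAt_rpow_of_sub_one_eq hs ?_).const_mul _).const_mul _)).sub
      (((hasDerivAt_rpow_of_sub_one_eq hs ?_).const_mul _).const_mul _) <;> ring
  have hv : ∀ t : ℝ, 0 < t → HasDerivAt (fun t => K * t ^ (2 - α) - t ^ (3 - α))
      (K * ((2 - α) * t ^ (1 - α)) - (3 - α) * t ^ (2 - α)) t := fun t ht => by
    refine ((hasDerivAt_rpow_of_sub_one_eq ht ?_).const_mul _).sub
      (hasDerivAt_rpow_of_sub_one_eq ht ?_) <;> ring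
  have hv' : ∀ t : ℝ, 0 < t → HasDerivAt
      (fun t => K * ((2 - α) * t ^ (1 - α)) - (3 - α) * t ^ (2 - α))
      (K * ((2 - α) * ((1 - α) * t ^ (-α))) - (3 - α) * ((2 - α) * t ^ (1 - α))) t :=
    fun t ht => by
    refine (((hasDerivAt_rpow_of_sub_one_eq ht ?_).const_mul _).const_mul _).sub
      ((hasDerivAt_rpow_of_sub_one_eq ht ?_).const_mul _) <;> ring
  refine concaveOn_of_hasDerivWithinAt2_nonpos (convex_Icc 0 K)
    (f' := fun t => (3 - α) * (t + b) ^ (2 - α) + (a - 2 * b) * ((2 - α) * (t + b) ^ (1 - α))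
      - b * (a - b) * ((1 - α) * (t + b) ^ (-α))
      + (K * ((2 - α) * t ^ (1 - α)) - (3 - α) * t ^ (2 - α)))
    (f'' := fun t => (3 - α) * ((2 - α) * (t + b) ^ (1 - α))
      + (a - 2 * b) * ((2 - α) * ((1 - α) * (t + b) ^ (-α)))
      - b * (a - b) * ((1 - α) * (-α * (t + b) ^ (-α - 1)))
      + (K * ((2 - α) * ((1 - α) * t ^ (-α))) - (3 - α) * ((2 - α) * t ^ (1 - α)))) ?_
    (fun t ht => ?_) (fun t ht => ?_) (fun t ht => ?_)
  · intro t ht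
    have hs : t + b ≠ 0 := by linarith [ht.1]
    exact ContinuousAt.continuousWithinAt <| by
      fun_prop (disch := first | exact Or.inl hs | exact Or.inr (by linarith))
  all_goals
    rw [interior_Icc] at ht
    have hs : 0 < t + b := by linarith [ht.1]
  · exact (((hu _ hs).comp_add_const t b).add (hv t ht.1)).hasDerivWithinAt
  · exact (((hu' _ hs).comp_add_const t b).add (hv' t ht.1)).hasDerivWithinAt
  · exact shifted_rpow_combination_deriv2_nonpos hb hba hα1 hα2 ht.1 ht.2.le

end Concavity

-- The paper's `q(t)` with `r = μ/ε`; a cell of size `m` contributes `K^{α-2} ε q(m)` to `I^Q`.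
noncomputable def cellContribution (K r α t : ℝ) : ℝ :=
  t * (t + r ^ α - 1) * (t + r - 1) ^ (1 - α) + (K - t) * t ^ (2 - α)

lemma cellContribution_eq_shifted_rpow_combination {K r α t : ℝ} (hr : 1 < r) (hα : α ≤ 2)
    (ht : 0 ≤ t) :
    cellContribution K r α t = (t + (r - 1)) ^ (3 - α)
      + (r ^ α - 1 - 2 * (r - 1)) * (t + (r - 1)) ^ (2 - α)
      - (r - 1) * (r ^ α - 1 - (r - 1)) * (t + (r - 1)) ^ (1 - α)
      + (K * t ^ (2 - α) - t ^ (3 - α)) := by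
  have hs : 0 < t + (r - 1) := by linarith
  have hs2 : (t + (r - 1)) ^ (2 - α) = (t + (r - 1)) ^ (1 - α) * (t + (r - 1)) := by
    rw [← rpow_add_one hs.ne']; ring_nf
  have hs3 : (t + (r - 1)) ^ (3 - α) = (t + (r - 1)) ^ (2 - α) * (t + (r - 1)) := by
    rw [← rpow_add_one hs.ne']; ring_nf
  have ht3 : t ^ (3 - α) = t ^ (2 - α) * t := by
    rw [← rpow_add_one' ht (by linarith)]; ring_nf
  rw [cellContribution, hs3, hs2, ht3]
  ring_nf

lemma concaveOn_cellContribution {K r α : ℝ} (hr : 1 < r) (hα1 : 1 ≤ α) (hα2 : α ≤ 2) :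
    ConcaveOn ℝ (Icc 0 K) (cellContribution K r α) := by
  have hrα : r ≤ r ^ α := self_le_rpow_of_one_le hr.le hα1
  refine (concaveOn_shifted_rpow_combination (a := r ^ α - 1) (b := r - 1) (by linarith)
    (by linarith) hα1 hα2).congr fun t ht => ?_
  exact (cellContribution_eq_shifted_rpow_combination hr hα2 ht.1).symm

lemma cellContribution_eq_mul {K r α t : ℝ} (ht : 0 ≤ t) (hα : α ≠ 2) :
    cellContribution K r α t
      = t * ((t + r ^ α - 1) * (t + r - 1) ^ (1 - α) + (K - t) * t ^ (1 - α)) := by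
  have : t ^ (2 - α) = t ^ (1 - α) * t := by
    rw [← rpow_add_one' ht (by contrapose! hα; linarith)]; ring_nf
  rw [cellContribution, this]; ring

lemma mul_cellContribution_div {K M r α : ℝ} (hK : 0 < K) (hM : 0 < M) (hr : 1 ≤ r) :
    K ^ (α - 2) * (M * cellContribution K r α (K / M))
      = K ^ (α - 1) * ((K / M + r ^ α - 1) / (K / M + r - 1) ^ (α - 1)
        + (M - 1) * (K / M) ^ (2 - α)) := by
  have hc : 0 < K / M + r - 1 := by have := div_pos hK hM; linarith
  have hKα : K ^ (α - 1) = K ^ (α - 2) * K := by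
    rw [← rpow_add_one hK.ne']; ring_nf
  have hneg : (K / M + r - 1) ^ (1 - α) = ((K / M + r - 1) ^ (α - 1))⁻¹ := by
    rw [← rpow_neg hc.le, neg_sub]
  rw [cellContribution, hKα, hneg]
  field_simp

lemma one_div_mul_mul_div_rpow {K w P : ℝ} (hK : 0 < K) (hw : 0 < w) (hP : 0 ≤ P) (α : ℝ) :
    1 / K * w * (1 / K * P / w) ^ (1 - α) = K ^ (α - 2) * (w ^ α * P ^ (1 - α)) := by
  have hKα : K ^ (α - 2) = (1 / K) ^ (1 - α) / K := by
    rw [one_div, inv_rpow hK.le, ← rpow_neg hK.le, neg_sub, ← rpow_sub_one hK.ne']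
    ring_nf
  have hwα : w ^ α = w / w ^ (1 - α) := by
    simpa only [rpow_one, sub_sub_cancel] using rpow_sub hw 1 (1 - α)
  rw [div_rpow (by positivity) hw.le, mul_rpow (by positivity) hP, hKα, hwα]
  field_simp

variable {ι κ : Type*}

section

variable [DecidableEq ι]

def symmetricChannel (μ ε : ℝ) (x y : ι) : ℝ := if y = x then μ else ε

lemma sum_ite_eq_mem_card (A : Finset ι) (j : ι) (u v : ℝ) :
    ∑ i ∈ A, (if j = i then u else v) = if j ∈ A then u + (#A - 1) * v else #A * v := by
  have : ∀ i, (if j = i then u else v) = v + if j = i then u - v else 0 := fun i => by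
    split_ifs <;> ring
  simp only [this, sum_add_distrib, sum_const, nsmul_eq_mul, sum_ite_eq]
  split_ifs <;> ring

lemma sum_ite_eq_mem_card' (A : Finset ι) (j : ι) (u v : ℝ) :
    ∑ i ∈ A, (if i = j then u else v) = if j ∈ A then u + (#A - 1) * v else #A * v := by
  simp_rw [eq_comm (a := _) (b := j)]
  exact sum_ite_eq_mem_card A j u v

end

lemma sum_uniform_rpow_eq [Fintype ι] [DecidableEq κ] (f : ι → κ) {K : ℝ} (hK : 0 < K)
    {W : ι → ι → ℝ} (hW : ∀ x y, 0 < W x y) (α : ℝ) :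
    ∑ x, ∑ y, 1 / K * W x y * ((∑ x' ∈ univ.filter (fun x' => f x' = f x), 1 / K * W x' y)
        / W x y) ^ (1 - α)
      = K ^ (α - 2) * ∑ x, ∑ y, W x y ^ α
          * (∑ x' ∈ univ.filter (fun x' => f x' = f x), W x' y) ^ (1 - α) := by
  rw [mul_sum]
  refine sum_congr rfl fun x _ => ?_
  rw [mul_sum]
  refine sum_congr rfl fun y _ => ?_
  rw [← mul_sum]
  exact one_div_mul_mul_div_rpow hK (hW x y) (sum_nonneg fun x' _ => (hW x' y).le) α

lemma sum_symmetricChannel_rpow [Fintype ι] [DecidableEq ι] {μ ε α : ℝ} (hε : 0 < ε) (hμ : 0 < μ)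
    {A : Finset ι} {x : ι} (hx : x ∈ A) :
    ∑ y, symmetricChannel μ ε x y ^ α * (∑ x' ∈ A, symmetricChannel μ ε x' y) ^ (1 - α)
      = ε * ((#A + (μ / ε) ^ α - 1) * (#A + μ / ε - 1) ^ (1 - α)
        + (Fintype.card ι - #A) * (#A : ℝ) ^ (1 - α)) := by
  simp only [symmetricChannel, sum_ite_eq_mem_card]
  set P : ι → ℝ := fun y => if y ∈ A then μ + (#A - 1) * ε else #A * ε
  have hin : ∑ y ∈ A, (if y = x then μ else ε) ^ α * P y ^ (1 - α)
      = (μ ^ α + (#A - 1) * ε ^ α) * (μ + (#A - 1) * ε) ^ (1 - α) := by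
    rw [sum_congr rfl fun y hy => by rw [show P y = _ from if_pos hy]]
    simp only [← sum_mul, apply_ite (· ^ α), sum_ite_eq_mem_card' A x, if_pos hx]
  have hout : ∑ y ∈ Aᶜ, (if y = x then μ else ε) ^ α * P y ^ (1 - α)
      = (Fintype.card ι - #A) * (ε ^ α * (#A * ε) ^ (1 - α)) := by
    rw [sum_congr rfl fun y hy => by
      rw [show P y = _ from if_neg (mem_compl.1 hy),
        if_neg (ne_of_mem_of_not_mem hx (mem_compl.1 hy)).symm],
      sum_const, card_compl, nsmul_eq_mul, Nat.cast_sub (card_le_univ A)]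
  rw [← sum_add_sum_compl A, hin, hout]
  have hm : (1 : ℝ) ≤ #A := by exact_mod_cast card_pos.2 ⟨x, hx⟩
  have hμα : μ ^ α = (μ / ε) ^ α * ε ^ α := by
    rw [← mul_rpow (by positivity) hε.le, div_mul_cancel₀ _ hε.ne']
  have hcol : μ + (#A - 1) * ε = (#A + μ / ε - 1) * ε := by field_simp; ring
  have hεε : ε ^ α * ε ^ (1 - α) = ε := by rw [← rpow_add hε, add_sub_cancel, rpow_one]
  have hpos : 0 ≤ (#A : ℝ) + μ / ε - 1 := by linarith [div_pos hμ hε]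
  rw [hμα, hcol, mul_rpow hpos hε.le, mul_rpow (by positivity) hε.le]
  linear_combination ((#A + (μ / ε) ^ α - 1) * (#A + μ / ε - 1) ^ (1 - α)
    + (Fintype.card ι - #A) * (#A : ℝ) ^ (1 - α)) * hεε

lemma sum_sum_symmetricChannel_rpow [Fintype ι] [DecidableEq ι] [Fintype κ] [DecidableEq κ]
    (f : ι → κ) {μ ε α : ℝ} (hε : 0 < ε) (hμ : 0 < μ)
    (hα : α ≠ 2) :
    ∑ x, ∑ y, symmetricChannel μ ε x y ^ α
        * (∑ x' ∈ univ.filter (fun x' => f x' = f x), symmetricChannel μ ε x' y) ^ (1 - α)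
      = ε * ∑ z, cellContribution (Fintype.card ι) (μ / ε) α #(univ.filter (fun x => f x = z)) := by
  set h : ℝ → ℝ := fun m => (m + (μ / ε) ^ α - 1) * (m + μ / ε - 1) ^ (1 - α)
    + (Fintype.card ι - m) * m ^ (1 - α)
  calc _ = ∑ x, ε * h #(univ.filter (fun x' => f x' = f x)) :=
        sum_congr rfl fun x _ => sum_symmetricChannel_rpow hε hμ (mem_filter.2 ⟨mem_univ x, rfl⟩)
    _ = ε * ∑ z, #(univ.filter (fun x => f x = z)) * h #(univ.filter (fun x => f x = z)) := by
        rw [← mul_sum, ← sum_fiberwise' univ f fun z => h #(univ.filter (fun x => f x = z))]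
        simp only [sum_const, nsmul_eq_mul]
    _ = _ := by
        congr 1
        exact sum_congr rfl fun z _ => (cellContribution_eq_mul (Nat.cast_nonneg _) hα).symm

theorem stmt_16_general (K M : ℕ) (hK : 0 < K) (hM : 0 < M)
    (μ ε : ℝ) (hε : 0 < ε) (hεμ : ε < μ)
    (α : ℝ) (hα1 : 1 < α) (hα2 : α < 2)
    (f : Fin K → Fin M)
    (W : Fin K → Fin K → ℝ) (hWdef : ∀ x y, W x y = if y = x then μ else ε)
    (qf : ℝ → ℝ)
    (hqf : ∀ t : ℝ, qf t = t * (t + (μ/ε) ^ α - 1) * (t + μ/ε - 1) ^ (1 - α)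
        + ((K:ℝ) - t) * t ^ (2 - α)) :
    ((∑ x, ∑ y, (1/(K:ℝ)) * W x y *
        ((∑ x' ∈ Finset.univ.filter (fun x' => f x' = f x), (1/(K:ℝ)) * W x' y)
          / W x y) ^ (1 - α))
      = (K:ℝ) ^ (α - 2) * ε *
          ∑ z : Fin M, qf ((Finset.univ.filter (fun x => f x = z)).card))
    ∧ ((K:ℝ) ^ (α - 2) * ε *
          ∑ z : Fin M, qf ((Finset.univ.filter (fun x => f x = z)).card)
        ≤ (K:ℝ) ^ (α - 1) * ε *
            (((K:ℝ)/(M:ℝ) + (μ/ε) ^ α - 1) / ((K:ℝ)/(M:ℝ) + μ/ε - 1) ^ (α - 1)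
              + ((M:ℝ) - 1) * ((K:ℝ)/(M:ℝ)) ^ (2 - α)))
    ∧ ((∀ z : Fin M, ((Finset.univ.filter (fun x => f x = z)).card : ℝ) = (K:ℝ)/(M:ℝ)) →
        (K:ℝ) ^ (α - 2) * ε *
            ∑ z : Fin M, qf ((Finset.univ.filter (fun x => f x = z)).card)
          = (K:ℝ) ^ (α - 1) * ε *
              (((K:ℝ)/(M:ℝ) + (μ/ε) ^ α - 1) / ((K:ℝ)/(M:ℝ) + μ/ε - 1) ^ (α - 1)
                + ((M:ℝ) - 1) * ((K:ℝ)/(M:ℝ)) ^ (2 - α))) := by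
  obtain rfl : qf = cellContribution K (μ / ε) α := funext hqf
  obtain rfl : W = symmetricChannel μ ε := funext₂ hWdef
  have hμ : 0 < μ := hε.trans hεμ
  have hr : 1 < μ / ε := (one_lt_div hε).2 hεμ
  have hK' : (0 : ℝ) < K := by exact_mod_cast hK
  have hM' : (0 : ℝ) < M := by exact_mod_cast hM
  have hequal : (K : ℝ) ^ (α - 2) * ε * ∑ _z : Fin M, cellContribution K (μ / ε) α (K / M)
      = (K : ℝ) ^ (α - 1) * ε * ((K / M + (μ / ε) ^ α - 1) / (K / M + μ / ε - 1) ^ (α - 1)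
        + (M - 1) * (K / M) ^ (2 - α)) := by
    rw [sum_const, card_univ, Fintype.card_fin, nsmul_eq_mul]
    linear_combination ε * mul_cellContribution_div hK' hM' hr.le
  have hcells : ∑ z : Fin M, (#(univ.filter (fun x => f x = z)) : ℝ) = K := by
    rw [← Nat.cast_sum, ← card_eq_sum_card_fiberwise fun x _ => mem_coe.2 (mem_univ (f x)),
      card_univ, Fintype.card_fin]
  have hjensen : ∑ z : Fin M, cellContribution K (μ / ε) α #(univ.filter (fun x => f x = z))
      ≤ ∑ _z : Fin M, cellContribution K (μ / ε) α (K / M) := by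
    simpa only [hcells, card_univ, Fintype.card_fin, sum_const, nsmul_eq_mul] using
      (concaveOn_cellContribution hr hα1.le hα2.le).sum_le_card_mul_map_sum_div_card
        ⟨⟨0, hM⟩, mem_univ _⟩ (p := fun z : Fin M => (#(univ.filter (fun x => f x = z)) : ℝ))
        fun z _ => ⟨Nat.cast_nonneg _, by exact_mod_cast (card_le_univ _).trans_eq (card_fin K)⟩
  have hW : ∀ x y : Fin K, 0 < symmetricChannel μ ε x y := fun x y => by
    unfold symmetricChannel; split_ifs <;> assumption
  refine ⟨?_, le_of_le_of_eq (mul_le_mul_of_nonneg_left hjensen (by positivity)) hequal,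
    fun hall => ?_⟩
  · rw [sum_uniform_rpow_eq f hK' hW, sum_sum_symmetricChannel_rpow f hε hμ hα2.ne,
      Fintype.card_fin, mul_assoc]
  · simp only [hall]
    exact hequal

/-- For the uniform source, the symmetric channel and `Q(t) = t^{1-α}` with
`1 < α < 2`: `I^Q(X;(Y,Z)) = K^{α-2} ε Σ_z q(|A_z|)`, this is at most the value
obtained with equal cell sizes `K/M`, with equality when all cells have size `K/M`. -/
theorem stmt_16 (K M : ℕ) (hK : 0 < K) (hM : 0 < M)
    (μ ε : ℝ) (hε : 0 < ε) (hεμ : ε < μ) (hsum : μ + ((K:ℝ) - 1) * ε = 1)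
    (α : ℝ) (hα1 : 1 < α) (hα2 : α < 2)
    (f : Fin K → Fin M) (hf : Function.Surjective f)
    (W : Fin K → Fin K → ℝ) (hWdef : ∀ x y, W x y = if y = x then μ else ε)
    (qf : ℝ → ℝ)
    (hqf : ∀ t : ℝ, qf t = t * (t + (μ/ε) ^ α - 1) * (t + μ/ε - 1) ^ (1 - α)
        + ((K:ℝ) - t) * t ^ (2 - α)) :
    ((∑ x, ∑ y, (1/(K:ℝ)) * W x y *
        ((∑ x' ∈ Finset.univ.filter (fun x' => f x' = f x), (1/(K:ℝ)) * W x' y)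
          / W x y) ^ (1 - α))
      = (K:ℝ) ^ (α - 2) * ε *
          ∑ z : Fin M, qf ((Finset.univ.filter (fun x => f x = z)).card))
    ∧ ((K:ℝ) ^ (α - 2) * ε *
          ∑ z : Fin M, qf ((Finset.univ.filter (fun x => f x = z)).card)
        ≤ (K:ℝ) ^ (α - 1) * ε *
            (((K:ℝ)/(M:ℝ) + (μ/ε) ^ α - 1) / ((K:ℝ)/(M:ℝ) + μ/ε - 1) ^ (α - 1)
              + ((M:ℝ) - 1) * ((K:ℝ)/(M:ℝ)) ^ (2 - α)))
    ∧ ((∀ z : Fin M, ((Finset.univ.filter (fun x => f x = z)).card : ℝ) = (K:ℝ)/(M:ℝ)) →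
        (K:ℝ) ^ (α - 2) * ε *
            ∑ z : Fin M, qf ((Finset.univ.filter (fun x => f x = z)).card)
          = (K:ℝ) ^ (α - 1) * ε *
              (((K:ℝ)/(M:ℝ) + (μ/ε) ^ α - 1) / ((K:ℝ)/(M:ℝ) + μ/ε - 1) ^ (α - 1)
                + ((M:ℝ) - 1) * ((K:ℝ)/(M:ℝ)) ^ (2 - α))) :=
  stmt_16_general K M hK hM μ ε hε hεμ α hα1 hα2 f W hWdef qf hqf
end

section
/- Let K > l ≥ 1 be integers, identify 𝒳 with the residues {0,1,…,K−1}, let X be uniform on 𝒳, and let the channel be p(y|x)=1/l if (y−x) mod K ∈ {0,1,…,l−1} and p(y|x)=0 otherwise. Then for every 1<α<2, every M with 1≤M≤K, and every encoder f:𝒳→{1,…,M}, I^Q(X;(Y,Z)) := Σ_{(x,y):p(y|x)>0} (1/K)·p(y|x)^α·( Σ_{x'∈A_{f(x)}} (1/K)·p(y|x') )^{1−α} ≤ K^{α−1}·(M/l)^{α−1}, where A_z=f⁻¹(z). -/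
open Finset

private lemma jensen_rpow {M : ℕ} (hM : 1 ≤ M) (g : Fin M → ℝ) (hg : ∀ z, 0 ≤ g z)
    {q : ℝ} (hq0 : 0 < q) (hq1 : q ≤ 1) :
    ∑ z, g z ^ q ≤ (M : ℝ) ^ (1 - q) * (∑ z, g z) ^ q := by
  have hMpos : (0:ℝ) < M := by exact_mod_cast Nat.lt_of_lt_of_le Nat.zero_lt_one hM
  have hw' : ∑ _i : Fin M, (1:ℝ) / M = 1 := by
    simp [Finset.card_univ]
    field_simp
  have key := Real.arith_mean_le_rpow_mean (s := Finset.univ)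
      (fun _ : Fin M => 1 / (M:ℝ)) (fun z => g z ^ q)
      (fun i _ => by positivity) hw'
      (fun i _ => Real.rpow_nonneg (hg i) q)
      (p := 1/q) (by rw [le_div_iff₀ hq0]; linarith)
  have h1 : ∀ z : Fin M, (g z ^ q) ^ ((1:ℝ)/q) = g z := by
    intro z
    rw [one_div, Real.rpow_rpow_inv (hg z) hq0.ne']
  rw [show (1:ℝ)/(1/q) = q by field_simp] at key
  simp only [h1] at key
  rw [← Finset.mul_sum, ← Finset.mul_sum] at key
  have h2 : ((1:ℝ)/M * ∑ z, g z) ^ q = (1/(M:ℝ)) ^ q * (∑ z, g z) ^ q :=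
    Real.mul_rpow (by positivity) (Finset.sum_nonneg fun z _ => hg z)
  rw [h2] at key
  have h3 : (0:ℝ) < (1/(M:ℝ)) := by positivity
  calc ∑ z, g z ^ q = (M:ℝ) * ((1:ℝ)/M * ∑ z, g z ^ q) := by field_simp
    _ ≤ (M:ℝ) * ((1/(M:ℝ)) ^ q * (∑ z, g z) ^ q) := by
        apply mul_le_mul_of_nonneg_left key hMpos.le
    _ = (M : ℝ) ^ (1 - q) * (∑ z, g z) ^ q := by
        rw [← mul_assoc]
        congr 1
        rw [one_div, ← Real.rpow_neg_one (M:ℝ), ← Real.rpow_mul hMpos.le,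
          show (1:ℝ)-q = 1 + -1*q by ring, Real.rpow_add hMpos, Real.rpow_one]

private lemma rpow_arith (K l M : ℝ) (hK : 0 < K) (hl : 0 < l) (hM : 0 < M) (α : ℝ) :
    K * ((1/K) * (1/l)^α * ((K*l)^(α-1) * (M^(α-1) * l^(2-α)))) = K^(α-1) * (M/l)^(α-1) := by
  have hKl : (0:ℝ) < K*l := by positivity
  have h1l : (0:ℝ) < 1/l := by positivity
  have hMl : (0:ℝ) < M/l := by positivity
  rw [show K * ((1/K) * (1/l)^α * ((K*l)^(α-1) * (M^(α-1) * l^(2-α))))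
      = (1/l)^α * ((K*l)^(α-1) * (M^(α-1) * l^(2-α))) by field_simp]
  rw [one_div l, ← Real.rpow_neg_one l, ← Real.rpow_mul hl.le]
  simp only [Real.rpow_def_of_pos hKl, Real.rpow_def_of_pos hM,
    Real.rpow_def_of_pos hl, Real.rpow_def_of_pos hK, Real.rpow_def_of_pos hMl,
    Real.log_div hM.ne' hl.ne', Real.log_mul hK.ne' hl.ne']
  simp only [← Real.exp_add]
  rw [Real.exp_eq_exp]
  ring

/-- For the uniform source on `ZMod K` and the sliding-window channel
`p(y|x) = 1/l` if `(y - x) mod K ∈ {0,…,l-1}` and `0` otherwise,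
`I^Q(X;(Y,Z)) ≤ K^{α-1}(M/l)^{α-1}` for every encoder and every `1 < α < 2`. -/
theorem stmt_17 (K l M : ℕ) [NeZero K] (hl : 1 ≤ l) (hlK : l < K)
    (hM : 1 ≤ M) (hMK : M ≤ K)
    (α : ℝ) (hα1 : 1 < α) (hα2 : α < 2)
    (f : ZMod K → Fin M)
    (W : ZMod K → ZMod K → ℝ)
    (hW : ∀ x y, W x y = if (y - x).val < l then 1/(l:ℝ) else 0) :
    (∑ x : ZMod K, ∑ y : ZMod K,
        if 0 < W x y then
          (1/(K:ℝ)) * (W x y) ^ α *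
            (∑ x' ∈ Finset.univ.filter (fun x' => f x' = f x), (1/(K:ℝ)) * W x' y) ^ (1 - α)
        else 0)
      ≤ (K:ℝ) ^ (α - 1) * ((M:ℝ)/(l:ℝ)) ^ (α - 1) := by
  have hK0 : (0:ℝ) < K := by
    have := NeZero.pos K; exact_mod_cast this
  have hl0 : (0:ℝ) < l := by exact_mod_cast hl
  have hM0 : (0:ℝ) < M := by exact_mod_cast hM
  have hKl0 : (0:ℝ) < (K:ℝ)*l := by positivity
  have hq0 : (0:ℝ) < 2 - α := by linarith
  have hq1 : (2:ℝ) - α ≤ 1 := by linarith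
  rw [Finset.sum_comm]
  have hbound : ∀ y : ZMod K,
      (∑ x : ZMod K,
        if 0 < W x y then
          (1/(K:ℝ)) * (W x y) ^ α *
            (∑ x' ∈ Finset.univ.filter (fun x' => f x' = f x), (1/(K:ℝ)) * W x' y) ^ (1 - α)
        else 0)
      ≤ (1/(K:ℝ)) * (1/(l:ℝ))^α * (((K:ℝ)*(l:ℝ))^(α-1) * ((M:ℝ)^(α-1) * (l:ℝ)^(2-α))) := by
    intro y
    set s : Finset (ZMod K) := Finset.univ.filter (fun x => (y - x).val < l) with hs
    -- cardinality of the window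
    have himg : s = (Finset.range l).image (fun i : ℕ => y - (i : ZMod K)) := by
      ext x
      simp only [hs, Finset.mem_filter, Finset.mem_univ, true_and, Finset.mem_image,
        Finset.mem_range]
      constructor
      · intro hx
        refine ⟨(y - x).val, hx, ?_⟩
        have h : ((y - x).val : ZMod K) = y - x := by rw [ZMod.natCast_val, ZMod.cast_id]
        rw [h, sub_sub_cancel]
      · rintro ⟨i, hi, rfl⟩
        rw [sub_sub_cancel, ZMod.val_cast_of_lt (hi.trans hlK)]
        exact hi
    have hscard : s.card = l := by
      rw [himg, Finset.card_image_of_injOn, Finset.card_range]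
      intro i hi j hj h
      simp only [Finset.mem_coe, Finset.mem_range] at hi hj
      have h2 : (i : ZMod K) = j := by
        have := sub_right_injective h
        exact this
      calc i = ((i : ZMod K)).val := (ZMod.val_cast_of_lt (hi.trans hlK)).symm
        _ = ((j : ZMod K)).val := by rw [h2]
        _ = j := ZMod.val_cast_of_lt (hj.trans hlK)
    set N : Fin M → ℕ := fun z => (s.filter (fun x => f x = z)).card with hNdef
    have hNsum : ∑ z, (N z : ℝ) = l := by
      have := Finset.card_eq_sum_card_fiberwise
        (f := f) (s := s) (t := Finset.univ) (fun x _ => Finset.mem_univ _)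
      rw [hscard] at this
      exact_mod_cast (congrArg (fun n : ℕ => (n:ℝ)) this).symm
    -- inner sum computation
    have hinner : ∀ z : Fin M,
        (∑ x' ∈ Finset.univ.filter (fun x' => f x' = z), (1/(K:ℝ)) * W x' y)
          = (N z : ℝ) / ((K:ℝ)*l) := by
      intro z
      have hterm : ∀ x' : ZMod K,
          (1/(K:ℝ)) * W x' y = if (y - x').val < l then 1/((K:ℝ)*l) else 0 := by
        intro x'
        rw [hW]
        split
        · rw [div_mul_div_comm, one_mul]
        · ring
      calc (∑ x' ∈ Finset.univ.filter (fun x' => f x' = z), (1/(K:ℝ)) * W x' y)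
          = ∑ x' ∈ Finset.univ.filter (fun x' => f x' = z),
              (if (y - x').val < l then 1/((K:ℝ)*l) else 0) :=
            Finset.sum_congr rfl fun x' _ => hterm x'
        _ = ∑ x' ∈ (Finset.univ.filter (fun x' => f x' = z)).filter
              (fun x' => (y - x').val < l), 1/((K:ℝ)*l) := (Finset.sum_filter _ _).symm
        _ = (N z : ℝ) * (1/((K:ℝ)*l)) := by
            rw [Finset.sum_const, nsmul_eq_mul]
            congr 2
            rw [hNdef, hs, Finset.filter_comm]
        _ = (N z : ℝ) / ((K:ℝ)*l) := by ring
    -- rewrite the sum over x as a sum over the window s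
    have hstep1 : (∑ x : ZMod K,
        if 0 < W x y then
          (1/(K:ℝ)) * (W x y) ^ α *
            (∑ x' ∈ Finset.univ.filter (fun x' => f x' = f x), (1/(K:ℝ)) * W x' y) ^ (1 - α)
        else 0)
        = ∑ x ∈ s, (1/(K:ℝ)) * (1/(l:ℝ))^α * ((N (f x) : ℝ)/((K:ℝ)*l))^(1-α) := by
      rw [hs, Finset.sum_filter]
      apply Finset.sum_congr rfl
      intro x _
      rw [hW x y, hinner (f x)]
      by_cases h : (y - x).val < l
      · rw [if_pos h, if_pos h, if_pos (by positivity), mul_assoc]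
      · rw [if_neg h, if_neg h, if_neg (lt_irrefl 0)]
    -- group by fibers
    have hstep2 : (∑ x ∈ s, (1/(K:ℝ)) * (1/(l:ℝ))^α * ((N (f x) : ℝ)/((K:ℝ)*l))^(1-α))
        = ∑ z : Fin M, (N z : ℝ) * ((1/(K:ℝ)) * (1/(l:ℝ))^α * ((N z : ℝ)/((K:ℝ)*l))^(1-α)) := by
      rw [← Finset.sum_fiberwise' s f
        (fun z => (1/(K:ℝ)) * (1/(l:ℝ))^α * ((N z : ℝ)/((K:ℝ)*l))^(1-α))]
      exact Finset.sum_congr rfl fun z _ => by rw [Finset.sum_const, nsmul_eq_mul]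
    have hstep3 : ∀ z : Fin M,
        (N z : ℝ) * ((N z : ℝ)/((K:ℝ)*l))^(1-α)
          = ((K:ℝ)*l)^(α-1) * (N z : ℝ)^(2-α) := by
      intro z
      rcases Nat.eq_zero_or_pos (N z) with h0 | hpos
      · rw [h0]
        simp only [Nat.cast_zero, zero_mul, zero_div]
        rw [Real.zero_rpow hq0.ne', mul_zero]
      · have hNz : (0:ℝ) < (N z : ℝ) := by exact_mod_cast hpos
        rw [Real.div_rpow hNz.le hKl0.le, div_eq_mul_inv,
          ← Real.rpow_neg hKl0.le, neg_sub, ← mul_assoc]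
        nth_rewrite 1 [← Real.rpow_one ((N z : ℝ))]
        rw [← Real.rpow_add hNz, show (1:ℝ)+(1-α) = 2-α by ring, mul_comm]
    -- Jensen
    have hjensen : ∑ z : Fin M, ((N z : ℝ))^(2-α) ≤ (M:ℝ)^(α-1) * (l:ℝ)^(2-α) := by
      have := jensen_rpow hM (fun z => (N z : ℝ)) (fun z => Nat.cast_nonneg _) hq0 hq1
      rw [hNsum, show (1:ℝ)-(2-α) = α-1 by ring] at this
      exact this
    rw [hstep1, hstep2]
    calc ∑ z : Fin M, (N z : ℝ) * ((1/(K:ℝ)) * (1/(l:ℝ))^α * ((N z : ℝ)/((K:ℝ)*l))^(1-α))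
        = (1/(K:ℝ)) * (1/(l:ℝ))^α *
            (((K:ℝ)*l)^(α-1) * ∑ z : Fin M, ((N z : ℝ))^(2-α)) := by
          rw [Finset.mul_sum, Finset.mul_sum]
          apply Finset.sum_congr rfl
          intro z _
          rw [← mul_assoc ((N z : ℝ))]
          rw [mul_comm ((N z : ℝ)) ((1/(K:ℝ)) * (1/(l:ℝ))^α), mul_assoc, hstep3 z]
      _ ≤ (1/(K:ℝ)) * (1/(l:ℝ))^α * (((K:ℝ)*l)^(α-1) * ((M:ℝ)^(α-1) * (l:ℝ)^(2-α))) := by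
          apply mul_le_mul_of_nonneg_left _ (by positivity)
          apply mul_le_mul_of_nonneg_left hjensen (by positivity)
  calc (∑ y : ZMod K, ∑ x : ZMod K,
        if 0 < W x y then
          (1/(K:ℝ)) * (W x y) ^ α *
            (∑ x' ∈ Finset.univ.filter (fun x' => f x' = f x), (1/(K:ℝ)) * W x' y) ^ (1 - α)
        else 0)
      ≤ ∑ _y : ZMod K,
          (1/(K:ℝ)) * (1/(l:ℝ))^α * (((K:ℝ)*(l:ℝ))^(α-1) * ((M:ℝ)^(α-1) * (l:ℝ)^(2-α))) :=
        Finset.sum_le_sum fun y _ => hbound y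
    _ = (K:ℝ) * ((1/(K:ℝ)) * (1/(l:ℝ))^α * (((K:ℝ)*(l:ℝ))^(α-1) * ((M:ℝ)^(α-1) * (l:ℝ)^(2-α)))) := by
        rw [Finset.sum_const, Finset.card_univ, ZMod.card, nsmul_eq_mul]
    _ = (K:ℝ) ^ (α - 1) * ((M:ℝ)/(l:ℝ)) ^ (α - 1) := rpow_arith _ _ _ hK0 hl0 hM0 α
end

section
/- Let K ≥ 2, let X be uniformly distributed on 𝒳={1,…,K}, let Y be generated by a channel with p(y|x)>0 for all x,y∈𝒳, let f:𝒳→{1,…,M} be an encoder and g:{1,…,M}×𝒳→𝒳 a decoder, and let D = Σ_{x,y} (1/K)·p(y|x)·1{g(f(x),y)≠x} be the Hamming distortion of the code, assumed to satisfy 0 < D < 1. Then for every α with 1<α<2: K^{α−1}·[ (1−D)^α + D^α/(K−1)^{α−1} ] ≤ M^{α−1}·Σ_y ( Σ_x (1/K)·p(y|x)^{1/(2−α)} )^{2−α}. -/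
/-!
Let `P` be the joint law of `(X, (Y, Z))` and `Q` the product of its marginals; the Hellinger sum
`H(P, Q) = ∑ P^α Q^(1-α)` is the generalized mutual information `I^Q(X; (Y, Z))`. Since `(p, q) ↦ p^α q^(1-α)` is jointly convex and
positively homogeneous, `H` can only decrease when `P` and `Q` are pushed forward along a map
(data processing). Pushing forward along the indicator of correct decoding `g Z Y = X` gives the
laws `(1 - D, D)` under `P` and `(1/K, 1 - 1/K)` under `Q`, whose Hellinger sum is the left-hand
side. On the other side, for each output `(y, z)` Hölder's inequality bounds the contribution of
`(y, z)` to `H(P, Q)` by `(∑ₓ (1/K) p(y,z|x)^(1/(2-α)))^(2-α)`, and concavity of `t ↦ t^(2-α)`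
merges the `M` values of `z` at the cost of the factor `M^(α-1)`.
-/

open Finset Real

section
variable {ι : Type*}

theorem rpow_sum_mul_rpow_sum_one_sub_le {s : Finset ι} {α : ℝ} (hα : 1 ≤ α) {a b : ι → ℝ}
    (ha : ∀ i, 0 ≤ a i) (hb : ∀ i, 0 ≤ b i) (hab : ∀ i, b i = 0 → a i = 0) :
    (∑ i ∈ s, a i) ^ α * (∑ i ∈ s, b i) ^ (1 - α) ≤ ∑ i ∈ s, a i ^ α * b i ^ (1 - α) := by
  have hα0 : α ≠ 0 := by positivity
  have hT : 0 ≤ ∑ i ∈ s, a i ^ α * b i ^ (1 - α) :=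
    sum_nonneg fun i _ => mul_nonneg (rpow_nonneg (ha i) _) (rpow_nonneg (hb i) _)
  rcases (sum_nonneg fun i _ => hb i : 0 ≤ ∑ i ∈ s, b i).eq_or_lt with hB | hB
  · have hA : ∑ i ∈ s, a i = 0 := sum_eq_zero fun i hi =>
      hab i ((sum_eq_zero_iff_of_nonneg fun j _ => hb j).1 hB.symm i hi)
    rwa [hA, zero_rpow hα0, zero_mul]
  have hmean : ∑ i ∈ s, b i * (a i / b i) = ∑ i ∈ s, a i := sum_congr rfl fun i _ => by
    rcases (hb i).eq_or_lt with h | h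
    · simp [← h, hab i h.symm]
    · field_simp
  have hpersp : ∀ i, b i * (a i / b i) ^ α = a i ^ α * b i ^ (1 - α) := fun i => by
    rcases (hb i).eq_or_lt with h | h
    · simp [← h, hab i h.symm, zero_rpow hα0]
    · rw [div_rpow (ha i) h.le, rpow_sub h, rpow_one]; field_simp
  -- Jensen for `t ↦ t^α` with weights `b i / ∑ b` at the points `a i / b i`
  have jensen := rpow_arith_mean_le_arith_mean_rpow s (fun i => b i / ∑ j ∈ s, b j)
    (fun i => a i / b i) (fun i _ => div_nonneg (hb i) hB.le)
    (by rw [← sum_div, div_self hB.ne']) (fun i _ => div_nonneg (ha i) (hb i)) hα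
  simp only [div_mul_eq_mul_div, ← sum_div, hmean, hpersp] at jensen
  rw [div_rpow (sum_nonneg fun i _ => ha i) hB.le, div_le_div_iff₀ (rpow_pos_of_pos hB α) hB]
    at jensen
  rw [rpow_sub hB, rpow_one, ← mul_div_assoc, div_le_iff₀ (rpow_pos_of_pos hB α)]
  exact jensen

/-- With `Q(t) = t^(1-α)`, the generalized mutual information `I^Q(U; V)` is `hellingerSum α` of
the joint law of `(U, V)` against the product of its marginals. -/
noncomputable def hellingerSum [Fintype ι] (α : ℝ) (p q : ι → ℝ) : ℝ :=
  ∑ i, p i ^ α * q i ^ (1 - α)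

theorem hellingerSum_map_le [Fintype ι] {κ : Type*} [Fintype κ] [DecidableEq κ] (φ : ι → κ)
    {α : ℝ} (hα : 1 ≤ α) {p q : ι → ℝ} (hp : ∀ i, 0 ≤ p i) (hq : ∀ i, 0 ≤ q i)
    (hpq : ∀ i, q i = 0 → p i = 0) :
    hellingerSum α (fun k => ∑ i with φ i = k, p i) (fun k => ∑ i with φ i = k, q i)
      ≤ hellingerSum α p q :=
  calc _ ≤ ∑ k, ∑ i with φ i = k, p i ^ α * q i ^ (1 - α) :=
        sum_le_sum fun _ _ => rpow_sum_mul_rpow_sum_one_sub_le hα hp hq hpq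
    _ = hellingerSum α p q := sum_fiberwise _ _ _

theorem sum_mul_rpow_le_interpolation {s : Finset ι} {α : ℝ} (hα1 : 1 ≤ α) (hα2 : α < 2)
    {w r : ι → ℝ} (hw : ∀ i, 0 ≤ w i) (hr : ∀ i, 0 ≤ r i) :
    ∑ i ∈ s, w i * r i ^ α
      ≤ (∑ i ∈ s, w i * r i) ^ (α - 1) * (∑ i ∈ s, w i * r i ^ (1 / (2 - α))) ^ (2 - α) := by
  have h2α : 0 < 2 - α := by linarith
  have hβ : 1 ≤ 1 / (2 - α) := by rw [le_div_iff₀ h2α]; linarith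
  -- weighted Hölder with weights `w r`, applied to `r^(α-1)` with exponent `1/(2-α)`
  have holder := inner_le_weight_mul_Lp_of_nonneg s hβ (fun i => w i * r i)
    (fun i => r i ^ (α - 1)) (fun i => mul_nonneg (hw i) (hr i)) (fun i => rpow_nonneg (hr i) _)
  have hexp : 1 + (α - 1) * (1 / (2 - α)) = 1 / (2 - α) := by field_simp; ring
  have hinv : (1 / (2 - α))⁻¹ = 2 - α := by rw [one_div, inv_inv]
  have hlhs : ∀ i, w i * r i * r i ^ (α - 1) = w i * r i ^ α := fun i => by
    rw [mul_assoc, ← rpow_one_add' (hr i) (by linarith), add_sub_cancel]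
  have hrhs : ∀ i, w i * r i * (r i ^ (α - 1)) ^ (1 / (2 - α)) = w i * r i ^ (1 / (2 - α)) :=
    fun i => by
      rw [← rpow_mul (hr i), mul_assoc, ← rpow_one_add' (hr i) (by rw [hexp]; positivity), hexp]
  simpa only [hlhs, hrhs, hinv, show 1 - (2 - α) = α - 1 by ring] using holder

theorem sum_rpow_le_card_rpow_mul_rpow_sum_s19 {s : Finset ι} {γ : ℝ} (hγ0 : 0 < γ) (hγ1 : γ ≤ 1)
    {t : ι → ℝ} (ht : ∀ i, 0 ≤ t i) :
    ∑ i ∈ s, t i ^ γ ≤ (#s : ℝ) ^ (1 - γ) * (∑ i ∈ s, t i) ^ γ := by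
  have holder := inner_le_weight_mul_Lp_of_nonneg s (one_le_inv₀ hγ0 |>.2 hγ1) (fun _ => 1)
    (fun i => t i ^ γ) (fun _ => zero_le_one) (fun i => rpow_nonneg (ht i) _)
  simpa [← rpow_mul (ht _), hγ0.ne'] using holder

end

/-- The Hölder upper bound on `C^Q`. -/
theorem hellingerSum_channel_le {X V : Type*} [Fintype X] [Fintype V] {α : ℝ} (hα1 : 1 < α)
    (hα2 : α < 2) {w : X → ℝ} {r : X → V → ℝ} (hw : ∀ x, 0 ≤ w x) (hr : ∀ x v, 0 ≤ r x v) :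
    hellingerSum α (fun i : X × V => w i.1 * r i.1 i.2) (fun i => w i.1 * ∑ x, w x * r x i.2)
      ≤ ∑ v, (∑ x, w x * r x v ^ (1 / (2 - α))) ^ (2 - α) := by
  unfold hellingerSum
  rw [Fintype.sum_prod_type, sum_comm]
  gcongr with v
  set S := ∑ x, w x * r x v
  have hS : 0 ≤ S := sum_nonneg fun x _ => mul_nonneg (hw x) (hr x v)
  have hsplit : ∀ x, (w x * r x v) ^ α * (w x * S) ^ (1 - α) = w x * r x v ^ α * S ^ (1 - α) :=
    fun x => by
      rw [mul_rpow (hw x) (hr x v), mul_rpow (hw x) hS]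
      calc _ = (w x ^ α * w x ^ (1 - α)) * r x v ^ α * S ^ (1 - α) := by ring
        _ = _ := by rw [← rpow_add' (hw x) (by norm_num), add_sub_cancel, rpow_one]
  rw [sum_congr rfl fun x _ => hsplit x, ← sum_mul]
  rcases hS.eq_or_lt with h0 | hpos
  · rw [← h0, zero_rpow (by linarith), mul_zero]
    exact rpow_nonneg (sum_nonneg fun x _ => mul_nonneg (hw x) (rpow_nonneg (hr x v) _)) _
  calc _ ≤ (S ^ (α - 1) * (∑ x, w x * r x v ^ (1 / (2 - α))) ^ (2 - α)) * S ^ (1 - α) :=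
        mul_le_mul_of_nonneg_right (sum_mul_rpow_le_interpolation hα1.le hα2 hw fun x => hr x v)
          (rpow_nonneg hS _)
    _ = _ := by rw [mul_right_comm, ← rpow_add hpos]; simp

theorem rpow_sub_one_mul_add_eq {K D α : ℝ} (hK : 1 ≤ K) :
    K ^ (α - 1) * ((1 - D) ^ α + D ^ α / (K - 1) ^ (α - 1))
      = (1 - D) ^ α * (1 / K) ^ (1 - α) + D ^ α * (1 - 1 / K) ^ (1 - α) := by
  have hK0 : 0 < K := by linarith
  have hK1 : 0 ≤ K - 1 := by linarith
  rw [one_sub_div hK0.ne', show 1 - α = -(α - 1) by ring, div_rpow hK1 hK0.le, one_div,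
    inv_rpow hK0.le, rpow_neg hK0.le, rpow_neg hK1]
  simp only [div_inv_eq_mul, inv_inv]
  ring

namespace WynerZiv

variable {K M : ℕ} (W : Fin K → Fin K → ℝ) (f : Fin K → Fin M)

/-- The channel from the source `x` to the decoder's input `(Y, Z) = (Y, f x)`. -/
noncomputable def codeChannel (x : Fin K) (v : Fin K × Fin M) : ℝ :=
  W x v.1 * if f x = v.2 then 1 else 0

noncomputable def jointLaw (i : Fin K × (Fin K × Fin M)) : ℝ :=
  1 / K * codeChannel W f i.1 i.2

noncomputable def productLaw (i : Fin K × (Fin K × Fin M)) : ℝ :=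
  1 / K * ∑ x, jointLaw W f (x, i.2)

noncomputable def distortion (g : Fin M → Fin K → Fin K) : ℝ :=
  ∑ x, ∑ y, 1 / (K : ℝ) * W x y * (if g (f x) y ≠ x then 1 else 0)

theorem sum_codeChannel_mul (x : Fin K) (F : Fin K × Fin M → ℝ) :
    ∑ v, codeChannel W f x v * F v = ∑ y, W x y * F (y, f x) := by
  rw [Fintype.sum_prod_type]
  refine sum_congr rfl fun y _ => ?_
  simp [codeChannel, ite_mul, mul_ite]

theorem sum_codeChannel (x : Fin K) : ∑ v, codeChannel W f x v = ∑ y, W x y := by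
  simpa using sum_codeChannel_mul W f x 1

variable {W}

theorem codeChannel_nonneg (hW : ∀ x y, 0 ≤ W x y) (x : Fin K) (v : Fin K × Fin M) :
    0 ≤ codeChannel W f x v := by
  unfold codeChannel; split_ifs <;> simp [hW]

theorem jointLaw_nonneg (hW : ∀ x y, 0 ≤ W x y) (i : Fin K × (Fin K × Fin M)) :
    0 ≤ jointLaw W f i :=
  mul_nonneg (by positivity) (codeChannel_nonneg f hW _ _)

theorem productLaw_nonneg (hW : ∀ x y, 0 ≤ W x y) (i : Fin K × (Fin K × Fin M)) :
    0 ≤ productLaw W f i :=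
  mul_nonneg (by positivity) (sum_nonneg fun _ _ => jointLaw_nonneg f hW _)

theorem jointLaw_eq_zero_of_productLaw_eq_zero (hW : ∀ x y, 0 ≤ W x y)
    (i : Fin K × (Fin K × Fin M)) (h : productLaw W f i = 0) : jointLaw W f i = 0 := by
  rcases mul_eq_zero.1 h with hK | hsum
  · rw [jointLaw, hK, zero_mul]
  · exact (sum_eq_zero_iff_of_nonneg fun _ _ => jointLaw_nonneg f hW _).1 hsum i.1 (mem_univ _)

theorem sum_jointLaw (hK : K ≠ 0) (hWsum : ∀ x, ∑ y, W x y = 1) : ∑ i, jointLaw W f i = 1 := by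
  rw [Fintype.sum_prod_type]
  simp only [jointLaw, ← mul_sum, sum_codeChannel, hWsum]
  simp [hK]

theorem sum_productLaw (hK : K ≠ 0) (hWsum : ∀ x, ∑ y, W x y = 1) : ∑ i, productLaw W f i = 1 := by
  rw [Fintype.sum_prod_type]
  simp only [productLaw, sum_const, card_univ, Fintype.card_fin, nsmul_eq_mul]
  rw [← mul_sum, sum_comm, ← Fintype.sum_prod_type', sum_jointLaw f hK hWsum]
  field_simp

/-- For every `(y, z)` exactly one `x` is decoded correctly. -/
theorem sum_productLaw_filter_decode_eq (hK : K ≠ 0) (hWsum : ∀ x, ∑ y, W x y = 1)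
    (g : Fin M → Fin K → Fin K) :
    ∑ i with g i.2.2 i.2.1 = i.1, productLaw W f i = 1 / K := by
  rw [sum_filter, Fintype.sum_prod_type, sum_comm]
  simp only [productLaw, sum_ite_eq, mem_univ, if_true]
  rw [← mul_sum, sum_comm, ← Fintype.sum_prod_type', sum_jointLaw f hK hWsum, mul_one]

theorem sum_jointLaw_filter_decode_ne (g : Fin M → Fin K → Fin K) :
    ∑ i with ¬ g i.2.2 i.2.1 = i.1, jointLaw W f i = distortion W f g := by
  rw [sum_filter, Fintype.sum_prod_type]
  refine sum_congr rfl fun x _ => ?_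
  have hmul := sum_codeChannel_mul W f x fun v => 1 / (K : ℝ) * if g v.2 v.1 ≠ x then 1 else 0
  calc _ = ∑ v, codeChannel W f x v * (1 / (K : ℝ) * if g v.2 v.1 ≠ x then 1 else 0) :=
        sum_congr rfl fun v _ => by by_cases h : g v.2 v.1 = x <;> simp [h, jointLaw, mul_comm]
    _ = _ := by rw [hmul]; exact sum_congr rfl fun y _ => by ring

theorem binary_le_hellingerSum_jointLaw (hK : K ≠ 0) (hWsum : ∀ x, ∑ y, W x y = 1)
    (hW : ∀ x y, 0 ≤ W x y) (g : Fin M → Fin K → Fin K) {α : ℝ} (hα : 1 ≤ α) :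
    (1 - distortion W f g) ^ α * (1 / K) ^ (1 - α)
        + distortion W f g ^ α * (1 - 1 / K) ^ (1 - α)
      ≤ hellingerSum α (jointLaw W f) (productLaw W f) := by
  have hdpi := hellingerSum_map_le (fun i : Fin K × (Fin K × Fin M) => decide (g i.2.2 i.2.1 = i.1))
    hα (jointLaw_nonneg f hW) (productLaw_nonneg f hW) (jointLaw_eq_zero_of_productLaw_eq_zero f hW)
  rw [hellingerSum, Fintype.sum_bool] at hdpi
  simp only [decide_eq_true_eq, decide_eq_false_iff_not] at hdpi
  have hcorrect : ∑ i with g i.2.2 i.2.1 = i.1, jointLaw W f i = 1 - distortion W f g := by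
    linarith [sum_filter_add_sum_filter_not univ
      (fun i : Fin K × (Fin K × Fin M) => g i.2.2 i.2.1 = i.1) (jointLaw W f),
      sum_jointLaw f hK hWsum, sum_jointLaw_filter_decode_ne (W := W) f g]
  have hwrong : ∑ i with ¬ g i.2.2 i.2.1 = i.1, productLaw W f i = 1 - 1 / K := by
    linarith [sum_filter_add_sum_filter_not univ
      (fun i : Fin K × (Fin K × Fin M) => g i.2.2 i.2.1 = i.1) (productLaw W f),
      sum_productLaw f hK hWsum, sum_productLaw_filter_decode_eq f hK hWsum g]
  rwa [hcorrect, hwrong, sum_jointLaw_filter_decode_ne, sum_productLaw_filter_decode_eq f hK hWsum]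
    at hdpi

theorem sum_rpow_sum_codeChannel_le {γ β : ℝ} (hγ0 : 0 < γ) (hγ1 : γ ≤ 1) (hβ : β ≠ 0)
    (hW : ∀ x y, 0 ≤ W x y) {w : Fin K → ℝ} (hw : ∀ x, 0 ≤ w x) :
    ∑ v, (∑ x, w x * codeChannel W f x v ^ β) ^ γ
      ≤ (M : ℝ) ^ (1 - γ) * ∑ y, (∑ x, w x * W x y ^ β) ^ γ := by
  rw [Fintype.sum_prod_type, mul_sum]
  gcongr with y
  have hpow : ∀ x z, codeChannel W f x (y, z) ^ β = W x y ^ β * if f x = z then 1 else 0 :=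
    fun x z => by
      rw [codeChannel, mul_rpow (hW x y) (by positivity)]
      split_ifs <;> simp [zero_rpow hβ]
  have hgroup : ∑ z, ∑ x, w x * codeChannel W f x (y, z) ^ β = ∑ x, w x * W x y ^ β := by
    rw [sum_comm]
    simp [hpow, mul_ite]
  simpa [hgroup] using sum_rpow_le_card_rpow_mul_rpow_sum_s19 (s := univ) hγ0 hγ1
    (t := fun z => ∑ x, w x * codeChannel W f x (y, z) ^ β)
    fun z => sum_nonneg fun x _ => mul_nonneg (hw x) (rpow_nonneg (codeChannel_nonneg f hW x _) _)

end WynerZiv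

open WynerZiv in
theorem stmt_19_general (K M : ℕ) (hK : 2 ≤ K)
    (W : Fin K → Fin K → ℝ) (hW : ∀ x y, 0 < W x y) (hWsum : ∀ x, ∑ y, W x y = 1)
    (f : Fin K → Fin M) (g : Fin M → Fin K → Fin K)
    (D : ℝ)
    (hD : D = ∑ x, ∑ y, (1/(K:ℝ)) * W x y * (if g (f x) y ≠ x then 1 else 0))
    (α : ℝ) (hα1 : 1 < α) (hα2 : α < 2) :
    (K:ℝ) ^ (α - 1) * ((1 - D) ^ α + D ^ α / ((K:ℝ) - 1) ^ (α - 1))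
      ≤ (M:ℝ) ^ (α - 1) * ∑ y, (∑ x, (1/(K:ℝ)) * (W x y) ^ (1/(2-α))) ^ (2-α) := by
  have hW0 : ∀ x y, 0 ≤ W x y := fun x y => (hW x y).le
  have h2α : 0 < 2 - α := by linarith
  have hgroup := sum_rpow_sum_codeChannel_le f h2α (by linarith) (one_div_pos.2 h2α).ne' hW0
    (w := fun _ => 1 / (K : ℝ)) fun _ => by positivity
  rw [show 1 - (2 - α) = α - 1 by ring] at hgroup
  subst hD
  calc _ = _ := rpow_sub_one_mul_add_eq (by norm_cast; omega)
    _ ≤ hellingerSum α (jointLaw W f) (productLaw W f) :=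
        binary_le_hellingerSum_jointLaw f (by omega) hWsum hW0 g hα1.le
    _ ≤ ∑ v, (∑ x, 1 / (K : ℝ) * codeChannel W f x v ^ (1 / (2 - α))) ^ (2 - α) :=
        hellingerSum_channel_le hα1 hα2 (w := fun _ => 1 / (K : ℝ)) (r := codeChannel W f)
          (fun _ => by positivity) (codeChannel_nonneg f hW0)
    _ ≤ _ := hgroup

/-- Main distortion lower bound for scalar Wyner–Ziv codes: for a uniform source,
Hamming distortion `D` of the code `(f,g)`, and `1 < α < 2`,
`K^{α-1}[(1-D)^α + D^α/(K-1)^{α-1}] ≤ M^{α-1} Σ_y (Σ_x (1/K) p(y|x)^{1/(2-α)})^{2-α}`. -/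
theorem stmt_19 (K M : ℕ) (hK : 2 ≤ K) (hM : 0 < M)
    (W : Fin K → Fin K → ℝ) (hW : ∀ x y, 0 < W x y) (hWsum : ∀ x, ∑ y, W x y = 1)
    (f : Fin K → Fin M) (g : Fin M → Fin K → Fin K)
    (D : ℝ)
    (hD : D = ∑ x, ∑ y, (1/(K:ℝ)) * W x y * (if g (f x) y ≠ x then 1 else 0))
    (hD0 : 0 < D) (hD1 : D < 1)
    (α : ℝ) (hα1 : 1 < α) (hα2 : α < 2) :
    (K:ℝ) ^ (α - 1) * ((1 - D) ^ α + D ^ α / ((K:ℝ) - 1) ^ (α - 1))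
      ≤ (M:ℝ) ^ (α - 1) * ∑ y, (∑ x, (1/(K:ℝ)) * (W x y) ^ (1/(2-α))) ^ (2-α) :=
  stmt_19_general K M hK W hW hWsum f g D hD α hα1 hα2
end
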